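/- arXiv:1412.3348 — 6 statements merged into one kernel-verified Lean document; each statement's English description precedes it below -/
import Mathlib

section
/- Let X be a metric space homeomorphic to ℝ² with locally finite Hausdorff 2-measure. Then every open ball B ⊂ X has positive Hausdorff 2-measure. -/
/-!
Inside the ball sits an embedded square `γ([0,1]²)` with sides `L`, `R` (left, right) and
`B`, `T` (bottom, top). The map `Φ p = (d(p, L), d(p, B))` is 1-Lipschitz, so
`ℋ²(Φ(square)) ≤ ℋ²(square)`. Its first coordinate vanishes on `L` and is at least
`a := d(R, L) > 0` on `R`, and likewise the second one with `B`, `T` and `b := d(T, B)`; so by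
the Poincaré–Miranda theorem `Φ(square)` contains the rectangle `(0, a) × (0, b)`, which has
positive area. Poincaré–Miranda in turn follows from a mod 2 count of `{0,1}`-coloured edges on
finer and finer grids (a Sperner-type lemma).
-/

open MeasureTheory Metric
open scoped ENNReal

section Sperner

open Finset

lemma sum_range_add_succ_of_charTwo {R : Type*} [Ring R] [CharP R 2] (a : ℕ → R) (n : ℕ) :
    ∑ j ∈ range n, (a j + a (j + 1)) = a 0 + a n := by
  simpa [CharTwo.sub_eq_add, add_comm] using sum_range_sub a n

def zeroOneEdge (a b : Fin 3) : ZMod 2 :=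
  if (a = 0 ∧ b = 1) ∨ (a = 1 ∧ b = 0) then 1 else 0

lemma zeroOneEdge_eq_zero_of_ne_zero {a b : Fin 3} (ha : a ≠ 0) (hb : b ≠ 0) :
    zeroOneEdge a b = 0 := by
  fin_cases a <;> fin_cases b <;> simp_all <;> rfl

lemma zeroOneEdge_eq_zero_of_ne_one {a b : Fin 3} (ha : a ≠ 1) (hb : b ≠ 1) :
    zeroOneEdge a b = 0 := by
  fin_cases a <;> fin_cases b <;> simp_all <;> rfl

lemma zeroOneEdge_eq_of_ne_two {a b : Fin 3} (ha : a ≠ 2) (hb : b ≠ 2) :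
    zeroOneEdge a b = (if a = 1 then 1 else 0) + (if b = 1 then 1 else 0) := by
  fin_cases a <;> fin_cases b <;> simp_all <;> rfl

lemma mem_of_zeroOneEdge_cycle {a b a' b' : Fin 3}
    (h : zeroOneEdge a b + zeroOneEdge a' b' + (zeroOneEdge a a' + zeroOneEdge b b') = 1)
    (k : Fin 3) : k ∈ ({a, b, a', b'} : Finset (Fin 3)) := by
  revert h k
  fin_cases a <;> fin_cases b <;> fin_cases a' <;> fin_cases b' <;> decide

lemma exists_trichromatic_cell (n : ℕ) (c : ℕ → ℕ → Fin 3)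
    (hleft : ∀ j ≤ n, c 0 j ≠ 1) (hright : ∀ j ≤ n, c n j = 1)
    (hbottom : ∀ i ≤ n, c i 0 ≠ 2) (htop : ∀ i ≤ n, c i n ≠ 0) :
    ∃ i < n, ∃ j < n, ∀ k : Fin 3,
      k ∈ ({c i j, c (i + 1) j, c i (j + 1), c (i + 1) (j + 1)} : Finset (Fin 3)) := by
  set H : ℕ → ℕ → ZMod 2 := fun i j => zeroOneEdge (c i j) (c (i + 1) j)
  set V : ℕ → ℕ → ZMod 2 := fun i j => zeroOneEdge (c i j) (c i (j + 1))
  have hbottom_sum : ∑ i ∈ range n, H i 0 = 1 := by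
    rw [sum_congr rfl fun i hi => zeroOneEdge_eq_of_ne_two (hbottom i (mem_range_le hi))
        (hbottom (i + 1) (mem_range.1 hi)), sum_range_add_succ_of_charTwo,
      if_neg (hleft 0 n.zero_le), if_pos (hright 0 n.zero_le), zero_add]
  have htop_sum : ∑ i ∈ range n, H i n = 0 := sum_eq_zero fun i hi =>
    zeroOneEdge_eq_zero_of_ne_zero (htop i (mem_range_le hi)) (htop (i + 1) (mem_range.1 hi))
  have hleft_sum : ∑ j ∈ range n, V 0 j = 0 := sum_eq_zero fun j hj =>
    zeroOneEdge_eq_zero_of_ne_one (hleft j (mem_range_le hj)) (hleft (j + 1) (mem_range.1 hj))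
  have hright_sum : ∑ j ∈ range n, V n j = 0 := sum_eq_zero fun j hj => by
    simp only [V, hright j (mem_range_le hj), hright (j + 1) (mem_range.1 hj)]
    decide
  -- Each interior edge lies on two cells, so the cell parities add up to the boundary parity.
  have htotal : ∑ i ∈ range n, ∑ j ∈ range n,
      (H i j + H i (j + 1) + (V i j + V (i + 1) j)) = 1 := by
    simp only [sum_add_distrib (f := fun j => H _ j + H _ (j + 1)),
      sum_range_add_succ_of_charTwo]
    rw [sum_add_distrib, sum_comm]
    simp only [sum_range_add_succ_of_charTwo (fun i => V i _), sum_add_distrib]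
    rw [hbottom_sum, htop_sum, hleft_sum, hright_sum]
    decide
  obtain ⟨i, hi, hcell⟩ := exists_ne_zero_of_sum_ne_zero (htotal.trans_ne one_ne_zero)
  obtain ⟨j, hj, hcell⟩ := exists_ne_zero_of_sum_ne_zero hcell
  refine ⟨i, mem_range.1 hi, j, mem_range.1 hj, mem_of_zeroOneEdge_cycle ?_⟩
  exact (by decide : ∀ x : ZMod 2, x ≠ 0 → x = 1) _ hcell

end Sperner

section PoincareMiranda

open Set unitInterval

noncomputable def mirandaColor (f g : ℝ × ℝ → ℝ) (p : ℝ × ℝ) : Fin 3 :=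
  if 0 < f p then 1 else if 0 < g p then 2 else 0

variable {f g : ℝ × ℝ → ℝ} {p : ℝ × ℝ}

lemma mirandaColor_eq_zero : mirandaColor f g p = 0 ↔ f p ≤ 0 ∧ g p ≤ 0 := by
  unfold mirandaColor; split_ifs <;> simp_all

lemma mirandaColor_eq_one : mirandaColor f g p = 1 ↔ 0 < f p := by
  unfold mirandaColor; split_ifs <;> simp_all

lemma mirandaColor_eq_two : mirandaColor f g p = 2 ↔ f p ≤ 0 ∧ 0 < g p := by
  unfold mirandaColor; split_ifs <;> simp_all

lemma dist_natCast_div_le {i m m' : ℕ} (hm : m ∈ Icc i (i + 1)) (hm' : m' ∈ Icc i (i + 1))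
    {N : ℝ} (hN : 0 < N) : dist ((m : ℝ) / N) ((m' : ℝ) / N) ≤ 1 / N := by
  obtain ⟨hm₁, hm₂⟩ := hm
  obtain ⟨hm'₁, hm'₂⟩ := hm'
  rw [Real.dist_eq, ← sub_div, abs_div, abs_of_pos hN]
  gcongr
  rw [abs_sub_le_iff, sub_le_iff_le_add, sub_le_iff_le_add]
  exact ⟨by exact_mod_cast (by omega : m ≤ 1 + m'), by exact_mod_cast (by omega : m' ≤ 1 + m)⟩

lemma exists_trichromatic_grid_cell
    (hfl : ∀ t ∈ I, f (0, t) < 0) (hfr : ∀ t ∈ I, 0 < f (1, t))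
    (hgb : ∀ t ∈ I, g (t, 0) < 0) (hgt : ∀ t ∈ I, 0 < g (t, 1)) {N : ℕ} (hN : 0 < N) :
    ∃ P ∈ I ×ˢ I, ∃ Q ∈ I ×ˢ I, ∃ U ∈ I ×ˢ I, (f P ≤ 0 ∧ g P ≤ 0) ∧ 0 < f Q ∧ 0 < g U ∧
      dist Q P ≤ 1 / N ∧ dist U P ≤ 1 / N := by
  have hNR : (0 : ℝ) < N := by exact_mod_cast hN
  have hmem : ∀ m ≤ N, (m : ℝ) / N ∈ I := fun m hm =>
    div_mem m.cast_nonneg hNR.le (by exact_mod_cast hm)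
  have hzero : ((0 : ℕ) : ℝ) / N = 0 := by simp
  have hone : (N : ℝ) / N = 1 := div_self hNR.ne'
  obtain ⟨i, hi, j, hj, hcell⟩ := exists_trichromatic_cell N
    (fun i j => mirandaColor f g ((i : ℝ) / N, (j : ℝ) / N))
    (fun j hj => by rw [Ne, mirandaColor_eq_one, hzero, not_lt]; exact (hfl _ (hmem j hj)).le)
    (fun j hj => by rw [mirandaColor_eq_one, hone]; exact hfr _ (hmem j hj))
    (fun i hi => by
      rw [Ne, mirandaColor_eq_two, hzero, not_and, not_lt]
      exact fun _ => (hgb _ (hmem i hi)).le)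
    (fun i hi => by
      rw [Ne, mirandaColor_eq_zero, hone, not_and, not_le]
      exact fun _ => hgt _ (hmem i hi))
  have hcorner : ∀ k, ∃ i' ∈ Icc i (i + 1), ∃ j' ∈ Icc j (j + 1),
      mirandaColor f g ((i' : ℝ) / N, (j' : ℝ) / N) = k := by
    intro k
    have hi₁ : i ∈ Icc i (i + 1) := ⟨le_rfl, i.le_succ⟩
    have hi₂ : i + 1 ∈ Icc i (i + 1) := ⟨i.le_succ, le_rfl⟩
    have hj₁ : j ∈ Icc j (j + 1) := ⟨le_rfl, j.le_succ⟩
    have hj₂ : j + 1 ∈ Icc j (j + 1) := ⟨j.le_succ, le_rfl⟩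
    rcases Finset.mem_insert.1 (hcell k) with h | h
    · exact ⟨i, hi₁, j, hj₁, h.symm⟩
    rcases Finset.mem_insert.1 h with h | h
    · exact ⟨i + 1, hi₂, j, hj₁, h.symm⟩
    rcases Finset.mem_insert.1 h with h | h
    · exact ⟨i, hi₁, j + 1, hj₂, h.symm⟩
    · exact ⟨i + 1, hi₂, j + 1, hj₂, (Finset.mem_singleton.1 h).symm⟩
  have hsq : ∀ {i' j'}, i' ∈ Icc i (i + 1) → j' ∈ Icc j (j + 1) →
      ((i' : ℝ) / N, (j' : ℝ) / N) ∈ I ×ˢ I := fun hi' hj' =>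
    ⟨hmem _ (hi'.2.trans hi), hmem _ (hj'.2.trans hj)⟩
  have hclose : ∀ {i' j' i'' j''}, i' ∈ Icc i (i + 1) → j' ∈ Icc j (j + 1) →
      i'' ∈ Icc i (i + 1) → j'' ∈ Icc j (j + 1) →
      dist ((i' : ℝ) / N, (j' : ℝ) / N) ((i'' : ℝ) / N, (j'' : ℝ) / N) ≤ 1 / N :=
    fun hi' hj' hi'' hj'' => max_le (dist_natCast_div_le hi' hi'' hNR)
      (dist_natCast_div_le hj' hj'' hNR)
  obtain ⟨i₀, hi₀, j₀, hj₀, h₀⟩ := hcorner 0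
  obtain ⟨i₁, hi₁, j₁, hj₁, h₁⟩ := hcorner 1
  obtain ⟨i₂, hi₂, j₂, hj₂, h₂⟩ := hcorner 2
  exact ⟨_, hsq hi₀ hj₀, _, hsq hi₁ hj₁, _, hsq hi₂ hj₂, mirandaColor_eq_zero.1 h₀,
    mirandaColor_eq_one.1 h₁, (mirandaColor_eq_two.1 h₂).2, hclose hi₁ hj₁ hi₀ hj₀,
    hclose hi₂ hj₂ hi₀ hj₀⟩

theorem poincare_miranda (hf : ContinuousOn f (I ×ˢ I)) (hg : ContinuousOn g (I ×ˢ I))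
    (hfl : ∀ t ∈ I, f (0, t) < 0) (hfr : ∀ t ∈ I, 0 < f (1, t))
    (hgb : ∀ t ∈ I, g (t, 0) < 0) (hgt : ∀ t ∈ I, 0 < g (t, 1)) :
    ∃ p ∈ I ×ˢ I, f p = 0 ∧ g p = 0 := by
  have hK : IsCompact (I ×ˢ I) := isCompact_Icc.prod isCompact_Icc
  by_contra! hne
  -- `|f| ⊔ |g|` has a positive minimum `m` on the square, but at the corner of colour `0` of a
  -- grid cell finer than the moduli of uniform continuity of `f` and `g` for `m` it is `< m`.
  obtain ⟨p₀, hp₀, hmin⟩ := hK.exists_isMinOn ⟨0, zero_mem, zero_mem⟩ (hf.abs.sup hg.abs)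
  set m := |f p₀| ⊔ |g p₀|
  have hm : 0 < m := by
    by_contra! hm
    exact hne p₀ hp₀ (abs_nonpos_iff.1 (le_sup_left.trans hm))
      (abs_nonpos_iff.1 (le_sup_right.trans hm))
  obtain ⟨δf, hδf, hfδ⟩ := Metric.uniformContinuousOn_iff.1
    (hK.uniformContinuousOn_of_continuous hf) m hm
  obtain ⟨δg, hδg, hgδ⟩ := Metric.uniformContinuousOn_iff.1
    (hK.uniformContinuousOn_of_continuous hg) m hm
  obtain ⟨n, hn⟩ := exists_nat_one_div_lt (lt_min hδf hδg)
  obtain ⟨P, hP, Q, hQ, U, hU, ⟨hfP, hgP⟩, hfQ, hgU, hQP, hUP⟩ :=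
    exists_trichromatic_grid_cell hfl hfr hgb hgt n.succ_pos
  push_cast at hQP hUP
  have hf' : |f P| < m := by
    have := hfδ Q hQ P hP (by linarith [min_le_left δf δg])
    rw [Real.dist_eq, abs_lt] at this
    rw [abs_of_nonpos hfP]
    linarith
  have hg' : |g P| < m := by
    have := hgδ U hU P hP (by linarith [min_le_right δf δg])
    rw [Real.dist_eq, abs_lt] at this
    rw [abs_of_nonpos hgP]
    linarith
  exact (sup_lt_iff.2 ⟨hf', hg'⟩).not_ge (isMinOn_iff.1 hmin P hP)

end PoincareMiranda

lemma exists_pos_le_infDist {Y : Type*} [PseudoMetricSpace Y] {K L : Set Y} (hK : IsCompact K)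
    (hL : IsClosed L) (hLne : L.Nonempty) (hKL : Disjoint K L) :
    ∃ a > 0, ∀ p ∈ K, a ≤ infDist p L := by
  rcases K.eq_empty_or_nonempty with rfl | hKne
  · exact ⟨1, one_pos, by simp⟩
  obtain ⟨p₀, hp₀, hmin⟩ := hK.exists_isMinOn hKne (continuous_infDist_pt L).continuousOn
  exact ⟨_, (hL.notMem_iff_infDist_pos hLne).1 (Set.disjoint_left.1 hKL hp₀), isMinOn_iff.1 hmin⟩

lemma hausdorffMeasure_pos_of_lipschitzWith {X : Type*} [EMetricSpace X] [MeasurableSpace X]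
    [BorelSpace X] {Φ : X → ℝ × ℝ} {K : NNReal} (hΦ : LipschitzWith K Φ) {s : Set X}
    (hs : 0 < volume (Φ '' s)) : 0 < μH[2] s := by
  rw [pos_iff_ne_zero] at hs ⊢
  intro h0
  have := hΦ.hausdorffMeasure_image_le zero_le_two s
  rw [h0, mul_zero, hausdorffMeasure_prod_real, nonpos_iff_eq_zero] at this
  exact hs this

section UnitSquare

open Set unitInterval
open scoped Topology

variable {X : Type*} [MetricSpace X] {γ : ℝ × ℝ → X}

lemma Ioo_prod_Ioo_subset_image_infDist (hγ : ContinuousOn γ (I ×ˢ I))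
    (hinj : InjOn γ (I ×ˢ I)) :
    ∃ a > 0, ∃ b > 0, Ioo 0 a ×ˢ Ioo 0 b ⊆
      (fun p => (infDist p (γ '' ({0} ×ˢ I)), infDist p (γ '' (I ×ˢ {0})))) '' (γ '' (I ×ˢ I)) := by
  have hsep : ∀ {S S' : Set (ℝ × ℝ)}, IsCompact S → IsCompact S' → S ⊆ I ×ˢ I →
      S' ⊆ I ×ˢ I → Disjoint S S' → S'.Nonempty →
      ∃ a > 0, ∀ p ∈ γ '' S, a ≤ infDist p (γ '' S') := fun hS hS' hsub hsub' hdisj hne =>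
    exists_pos_le_infDist (hS.image_of_continuousOn (hγ.mono hsub))
      (hS'.image_of_continuousOn (hγ.mono hsub')).isClosed (hne.image γ)
      (hdisj.image hinj hsub hsub')
  have hvert : ∀ {t}, t ∈ I → {t} ×ˢ I ⊆ I ×ˢ I :=
    fun ht => prod_mono (singleton_subset_iff.2 ht) le_rfl
  have hhor : ∀ {t}, t ∈ I → I ×ˢ {t} ⊆ I ×ˢ I :=
    fun ht => prod_mono le_rfl (singleton_subset_iff.2 ht)
  obtain ⟨a, ha, hRa⟩ := hsep (isCompact_singleton.prod isCompact_Icc)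
    (isCompact_singleton.prod isCompact_Icc) (hvert one_mem) (hvert zero_mem)
    (disjoint_prod.2 (Or.inl (disjoint_singleton.2 one_ne_zero))) ⟨(0, 0), rfl, zero_mem⟩
  obtain ⟨b, hb, hTb⟩ := hsep (isCompact_Icc.prod isCompact_singleton)
    (isCompact_Icc.prod isCompact_singleton) (hhor one_mem) (hhor zero_mem)
    (disjoint_prod.2 (Or.inr (disjoint_singleton.2 one_ne_zero))) ⟨(0, 0), zero_mem, rfl⟩
  refine ⟨a, ha, b, hb, ?_⟩
  rintro ⟨u, v⟩ ⟨⟨hu, hua⟩, hv, hvb⟩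
  obtain ⟨p, hp, hfp, hgp⟩ := poincare_miranda
    (f := fun w => infDist (γ w) (γ '' ({0} ×ˢ I)) - u)
    (g := fun w => infDist (γ w) (γ '' (I ×ˢ {0})) - v)
    (((continuous_infDist_pt _).comp_continuousOn hγ).sub continuousOn_const)
    (((continuous_infDist_pt _).comp_continuousOn hγ).sub continuousOn_const)
    (fun t ht => by
      rw [infDist_zero_of_mem (mem_image_of_mem γ (mk_mem_prod (mem_singleton _) ht))]
      linarith)
    (fun t ht => by linarith [hRa _ (mem_image_of_mem γ (mk_mem_prod (mem_singleton _) ht))])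
    (fun t ht => by
      rw [infDist_zero_of_mem (mem_image_of_mem γ (mk_mem_prod ht (mem_singleton _)))]
      linarith)
    (fun t ht => by linarith [hTb _ (mem_image_of_mem γ (mk_mem_prod ht (mem_singleton _)))])
  exact ⟨γ p, mem_image_of_mem γ hp, Prod.ext (sub_eq_zero.1 hfp) (sub_eq_zero.1 hgp)⟩

theorem hausdorffMeasure_image_unitSquare_pos [MeasurableSpace X] [BorelSpace X]
    (hγ : ContinuousOn γ (I ×ˢ I)) (hinj : InjOn γ (I ×ˢ I)) : 0 < μH[2] (γ '' (I ×ˢ I)) := by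
  obtain ⟨a, ha, b, hb, hsub⟩ := Ioo_prod_Ioo_subset_image_infDist hγ hinj
  have hrect : (0 : ℝ≥0∞) < volume (Ioo 0 a ×ˢ Ioo 0 b) := by
    rw [Measure.volume_eq_prod, Measure.prod_prod, Real.volume_Ioo, Real.volume_Ioo]
    exact ENNReal.mul_pos (by simpa using ha) (by simpa using hb)
  exact hausdorffMeasure_pos_of_lipschitzWith
    ((lipschitz_infDist_pt _).prodMk (lipschitz_infDist_pt _)) (hrect.trans_le (measure_mono hsub))

lemma exists_injective_unitSquare_subset {Y : Type*} [TopologicalSpace Y] (H : Y ≃ₜ ℝ × ℝ)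
    {y : Y} {U : Set Y} (hU : U ∈ 𝓝 y) :
    ∃ γ : ℝ × ℝ → Y, Continuous γ ∧ Function.Injective γ ∧ γ '' (I ×ˢ I) ⊆ U := by
  obtain ⟨ε, hε, hball⟩ := Metric.mem_nhds_iff.1 <|
    H.symm.continuous.continuousAt.preimage_mem_nhds (by rwa [H.symm_apply_apply])
  refine ⟨fun w => H.symm (H y + ε • (w - (2⁻¹, 2⁻¹))), by fun_prop,
    H.symm.injective.comp ((add_right_injective _).comp
      ((smul_right_injective _ hε.ne').comp (sub_left_injective))), ?_⟩
  rintro _ ⟨w, hw, rfl⟩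
  rw [eq_closedBall, closedBall_prod_same] at hw
  apply hball
  rw [mem_ball, dist_eq_norm, add_sub_cancel_left, norm_smul, Real.norm_of_nonneg hε.le,
    ← dist_eq_norm]
  nlinarith [mem_closedBall.1 hw]

end UnitSquare

theorem stmt2_general {X : Type*} [MetricSpace X] [MeasurableSpace X] [BorelSpace X]
    (hhomeo : Nonempty (X ≃ₜ EuclideanSpace ℝ (Fin 2)))
    (x : X) (r : ℝ) (hr : 0 < r) :
    0 < (μH[2] : Measure X) (Metric.ball x r) := by
  obtain ⟨h⟩ := hhomeo
  obtain ⟨γ, hγ, hinj, hsub⟩ := exists_injective_unitSquare_subset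
    (h.trans ((EuclideanSpace.equiv (Fin 2) ℝ).toHomeomorph.trans
      (Homeomorph.piFinTwo fun _ => ℝ))) (ball_mem_nhds x hr)
  exact (hausdorffMeasure_image_unitSquare_pos hγ.continuousOn hinj.injOn).trans_le
    (measure_mono hsub)

/-- If a metric space `X` is homeomorphic to `ℝ²` and its Hausdorff 2-measure is finite on
compact sets, then every ball in `X` has positive Hausdorff 2-measure. -/
theorem stmt2 {X : Type*} [MetricSpace X] [MeasurableSpace X] [BorelSpace X]
    (hhomeo : Nonempty (X ≃ₜ EuclideanSpace ℝ (Fin 2)))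
    (hfin : ∀ K : Set X, IsCompact K → (μH[2] : Measure X) K < ⊤)
    (x : X) (r : ℝ) (hr : 0 < r) :
    0 < (μH[2] : Measure X) (Metric.ball x r) :=
  stmt2_general hhomeo x r hr
end

section
/- Let X be a metric space with Hausdorff 2-measure ℋ², let A ⊂ X be Borel, let m : X → ℝ be L-Lipschitz, and let g : A → [0,∞] be Borel measurable. Then ∫_ℝ ∫_{A ∩ m⁻¹(t)} g dℋ¹ dt ≤ (4L/π) ∫_A g dℋ². -/
/-!
Cover `s` by sets `E n` of diameter at most `δ` with `∑ diam (E n) ^ 2` close to `μH[2] s`.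
The piece `E n` meets the fibre `m ⁻¹' {t}` only if `t` lies in the closure of `m '' E n`, an
interval of length at most `L * diam (E n)`. Hence `t ↦ ∑ diam (E n) * 1[t ∈ closure (m '' E n)]`
dominates the `δ`-approximation of `μH[1] (s ∩ m ⁻¹' {t})` and has integral at most
`L * ∑ diam (E n) ^ 2`; letting `δ → 0` (Fatou) bounds the integral of `t ↦ μH[1] (s ∩ m ⁻¹' {t})`
by `L * μH[2] s`.

Since `t ↦ μH[1] (s ∩ m ⁻¹' {t})` need not be measurable, the bound is proved for the upper
integral, which is countably subadditive; this extends it from indicators to simple functions and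
then to `g = ∑ₙ eapproxDiff g n`. Finally `4L/π` times the normalisation `π/4` of `ℋ²` is `L`.
-/

open MeasureTheory Set Filter Metric
open scoped ENNReal NNReal Topology

namespace MeasureTheory

section UpperLIntegral

variable {α : Type*} [MeasurableSpace α] (μ : Measure α)

noncomputable def upperLIntegral (f : α → ℝ≥0∞) : ℝ≥0∞ :=
  ⨅ h : {h : α → ℝ≥0∞ // Measurable h ∧ f ≤ h}, ∫⁻ x, h.1 x ∂μ

variable {μ}

theorem upperLIntegral_le_lintegral {f h : α → ℝ≥0∞} (hh : Measurable h) (hfh : f ≤ h) :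
    upperLIntegral μ f ≤ ∫⁻ x, h x ∂μ :=
  iInf_le (fun h : {h : α → ℝ≥0∞ // Measurable h ∧ f ≤ h} => ∫⁻ x, h.1 x ∂μ) ⟨h, hh, hfh⟩

theorem lintegral_le_upperLIntegral (f : α → ℝ≥0∞) : ∫⁻ x, f x ∂μ ≤ upperLIntegral μ f :=
  le_iInf fun h => lintegral_mono h.2.2

theorem exists_measurable_ge_lintegral_eq_upperLIntegral (f : α → ℝ≥0∞) :
    ∃ h : α → ℝ≥0∞, Measurable h ∧ f ≤ h ∧ ∫⁻ x, h x ∂μ = upperLIntegral μ f := by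
  obtain ⟨u, -, hu, hu_mem⟩ := exists_seq_tendsto_sInf
    (S := range fun h : {h : α → ℝ≥0∞ // Measurable h ∧ f ≤ h} => ∫⁻ x, h.1 x ∂μ)
    ⟨_, ⟨fun _ => ∞, measurable_const, fun _ => le_top⟩, rfl⟩ (OrderBot.bddBelow _)
  choose h hh using hu_mem
  have hinf : Measurable fun x => ⨅ n, (h n).1 x := .iInf fun n => (h n).2.1
  have hf_inf : f ≤ fun x => ⨅ n, (h n).1 x := fun x => le_iInf fun n => (h n).2.2 x
  refine ⟨_, hinf, hf_inf, le_antisymm (ge_of_tendsto' hu fun n => ?_)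
    (upperLIntegral_le_lintegral hinf hf_inf)⟩
  rw [← hh n]
  exact lintegral_mono fun x => iInf_le (fun n => (h n).1 x) n

theorem upperLIntegral_add_le (f g : α → ℝ≥0∞) :
    upperLIntegral μ (f + g) ≤ upperLIntegral μ f + upperLIntegral μ g := by
  obtain ⟨F, hF, hfF, hF_eq⟩ := exists_measurable_ge_lintegral_eq_upperLIntegral (μ := μ) f
  obtain ⟨G, hG, hgG, hG_eq⟩ := exists_measurable_ge_lintegral_eq_upperLIntegral (μ := μ) g
  calc upperLIntegral μ (f + g) ≤ ∫⁻ x, (F + G) x ∂μ :=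
        upperLIntegral_le_lintegral (hF.add hG) (add_le_add hfF hgG)
    _ = upperLIntegral μ f + upperLIntegral μ g := by
        rw [← hF_eq, ← hG_eq, ← lintegral_add_left hF]; rfl

theorem upperLIntegral_tsum_le (f : ℕ → α → ℝ≥0∞) :
    upperLIntegral μ (fun x => ∑' n, f n x) ≤ ∑' n, upperLIntegral μ (f n) := by
  choose F hF hfF hF_eq using fun n =>
    exists_measurable_ge_lintegral_eq_upperLIntegral (μ := μ) (f n)
  calc upperLIntegral μ (fun x => ∑' n, f n x) ≤ ∫⁻ x, ∑' n, F n x ∂μ :=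
        upperLIntegral_le_lintegral (.tsum hF) fun x => ENNReal.tsum_le_tsum fun n => hfF n x
    _ = ∑' n, upperLIntegral μ (f n) := by
        rw [lintegral_tsum fun n => (hF n).aemeasurable]
        exact tsum_congr hF_eq

theorem upperLIntegral_const_mul_le (c : ℝ≥0∞) (f : α → ℝ≥0∞) :
    upperLIntegral μ (fun x => c * f x) ≤ c * upperLIntegral μ f := by
  obtain ⟨F, hF, hfF, hF_eq⟩ := exists_measurable_ge_lintegral_eq_upperLIntegral (μ := μ) f
  calc upperLIntegral μ (fun x => c * f x) ≤ ∫⁻ x, c * F x ∂μ :=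
        upperLIntegral_le_lintegral (hF.const_mul c) fun x => by gcongr; exact hfF x
    _ = c * upperLIntegral μ f := by rw [lintegral_const_mul c hF, hF_eq]

end UpperLIntegral

section Coarea

variable {X : Type*} [EMetricSpace X] (m : X → ℝ) (E : ℕ → Set X)

noncomputable def fiberMajorant (t : ℝ) : ℝ≥0∞ :=
  ∑' n, (closure (m '' E n)).indicator (fun _ => ediam (E n)) t

theorem measurable_fiberMajorant : Measurable (fiberMajorant m E) :=
  .tsum fun _ => measurable_const.indicator isClosed_closure.measurableSet

variable {m}

theorem lintegral_fiberMajorant_le {L : ℝ≥0} (hm : LipschitzWith L m) :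
    ∫⁻ t, fiberMajorant m E t ≤ L * ∑' n, ediam (E n) ^ (2 : ℝ) := by
  simp only [fiberMajorant]
  rw [lintegral_tsum fun n =>
    (measurable_const.indicator isClosed_closure.measurableSet).aemeasurable,
    ← ENNReal.tsum_mul_left]
  refine ENNReal.tsum_le_tsum fun n => ?_
  rw [lintegral_indicator_const isClosed_closure.measurableSet]
  calc ediam (E n) * volume (closure (m '' E n)) ≤ ediam (E n) * (L * ediam (E n)) := by
        gcongr
        exact (Real.volume_le_diam _).trans ((ediam_closure _).le.trans (hm.ediam_image_le _))
    _ = L * ediam (E n) ^ (2 : ℝ) := by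
        rw [ENNReal.rpow_two, sq]; ring

theorem tsum_ediam_inter_fiber_le_fiberMajorant (t : ℝ) :
    ∑' n, ediam (E n ∩ m ⁻¹' {t}) ^ (1 : ℝ) ≤ fiberMajorant m E t := by
  refine ENNReal.tsum_le_tsum fun n => ?_
  rw [ENNReal.rpow_one]
  rcases (E n ∩ m ⁻¹' {t}).eq_empty_or_nonempty with he | ⟨x, hxE, hxt⟩
  · simp [he]
  · rw [indicator_of_mem (subset_closure (show t ∈ m '' E n from ⟨x, hxE, hxt⟩))]
    exact ediam_mono inter_subset_left

variable [MeasurableSpace X] [BorelSpace X]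

theorem exists_cover_tsum_ediam_rpow_lt {d : ℝ} (hd : 0 < d) {s : Set X} (hs : μH[d] s ≠ ∞)
    {r ε : ℝ≥0∞} (hr : 0 < r) (hε : ε ≠ 0) :
    ∃ E : ℕ → Set X, s ⊆ ⋃ n, E n ∧ (∀ n, ediam (E n) ≤ r) ∧
      ∑' n, ediam (E n) ^ d < μH[d] s + ε := by
  have hr_le : (⨅ (E : ℕ → Set X) (_ : s ⊆ ⋃ n, E n) (_ : ∀ n, ediam (E n) ≤ r),
      ∑' n, ⨆ _ : (E n).Nonempty, ediam (E n) ^ d) ≤ μH[d] s := by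
    rw [Measure.hausdorffMeasure_apply]
    exact le_iSup₂ (f := fun (r : ℝ≥0∞) (_ : 0 < r) =>
      ⨅ (E : ℕ → Set X) (_ : s ⊆ ⋃ n, E n) (_ : ∀ n, ediam (E n) ≤ r),
        ∑' n, ⨆ _ : (E n).Nonempty, ediam (E n) ^ d) r hr
  obtain ⟨E, hcov, hdiam, hsum⟩ : ∃ E : ℕ → Set X, s ⊆ ⋃ n, E n ∧ (∀ n, ediam (E n) ≤ r) ∧
      ∑' n, ⨆ _ : (E n).Nonempty, ediam (E n) ^ d < μH[d] s + ε := by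
    simpa only [iInf_lt_iff, exists_prop] using hr_le.trans_lt (ENNReal.lt_add_right hs hε)
  refine ⟨E, hcov, hdiam, (le_of_eq (tsum_congr fun n => ?_)).trans_lt hsum⟩
  rcases (E n).eq_empty_or_nonempty with he | he
  · simp [he, ENNReal.zero_rpow_of_pos hd]
  · simp [he]

theorem hausdorffMeasure_inter_fiber_le_liminf {s : Set X} {E : ℕ → ℕ → Set X}
    {r : ℕ → ℝ≥0∞} (hr : Tendsto r atTop (𝓝 0)) (hcov : ∀ k, s ⊆ ⋃ n, E k n)
    (hdiam : ∀ k n, ediam (E k n) ≤ r k) (t : ℝ) :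
    μH[1] (s ∩ m ⁻¹' {t}) ≤ liminf (fun k => fiberMajorant m (E k) t) atTop := by
  refine (Measure.hausdorffMeasure_le_liminf_tsum 1 _ r hr (fun k n => E k n ∩ m ⁻¹' {t})
    (.of_forall fun k n => (ediam_mono inter_subset_left).trans (hdiam k n))
    (.of_forall fun k x hx => ?_)).trans
    (liminf_le_liminf (.of_forall fun k => tsum_ediam_inter_fiber_le_fiberMajorant (E k) t))
  obtain ⟨n, hn⟩ := mem_iUnion.1 (hcov k hx.1)
  exact mem_iUnion.2 ⟨n, hn, hx.2⟩

variable {L : ℝ≥0}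

theorem upperLIntegral_hausdorffMeasure_inter_fiber_le (hm : LipschitzWith L m) (s : Set X) :
    upperLIntegral volume (fun t => μH[1] (s ∩ m ⁻¹' {t})) ≤ L * μH[2] s := by
  rcases eq_or_ne L 0 with rfl | hL
  · have hrange : (range m).Subsingleton := by
      rintro _ ⟨x, rfl⟩ _ ⟨y, rfl⟩
      simpa using hm.edist_le_mul x y
    calc upperLIntegral volume (fun t => μH[1] (s ∩ m ⁻¹' {t}))
        ≤ ∫⁻ t, (range m).indicator (fun _ => ∞) t :=
          upperLIntegral_le_lintegral (measurable_const.indicator hrange.measurableSet) fun t => by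
            by_cases ht : t ∈ range m
            · simp [ht]
            · simp [preimage_singleton_eq_empty.2 ht]
      _ = 0 := by rw [lintegral_indicator_const hrange.measurableSet, hrange.measure_zero, mul_zero]
      _ ≤ _ := zero_le
  rcases eq_or_ne (μH[2] s) ∞ with hs | hs
  · simp [hs, hL]
  have hδ : ∀ δ ≠ 0, upperLIntegral volume (fun t => μH[1] (s ∩ m ⁻¹' {t})) ≤
      L * (μH[2] s + δ) := by
    intro δ hδ
    choose E hcov hdiam hsum using fun k : ℕ => exists_cover_tsum_ediam_rpow_lt two_pos hs
      (ENNReal.inv_pos.2 (ENNReal.natCast_ne_top k)) hδ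
    calc upperLIntegral volume (fun t => μH[1] (s ∩ m ⁻¹' {t}))
        ≤ ∫⁻ t, liminf (fun k => fiberMajorant m (E k) t) atTop :=
          upperLIntegral_le_lintegral (.liminf fun k => measurable_fiberMajorant m (E k))
            (hausdorffMeasure_inter_fiber_le_liminf ENNReal.tendsto_inv_nat_nhds_zero hcov hdiam)
      _ ≤ liminf (fun k => ∫⁻ t, fiberMajorant m (E k) t) atTop :=
          lintegral_liminf_le fun k => measurable_fiberMajorant m (E k)
      _ ≤ L * (μH[2] s + δ) :=
          (liminf_le_liminf (.of_forall fun k => (lintegral_fiberMajorant_le _ hm).trans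
            (by gcongr; exact (hsum k).le))).trans_eq (liminf_const _)
  refine ENNReal.le_of_forall_pos_le_add fun ε hε _ => ?_
  calc upperLIntegral volume (fun t => μH[1] (s ∩ m ⁻¹' {t})) ≤ L * (μH[2] s + ε / L) :=
        hδ _ (ENNReal.div_pos (by exact_mod_cast hε.ne') ENNReal.coe_ne_top).ne'
    _ ≤ L * μH[2] s + ε := by
        rw [mul_add]
        gcongr
        exact ENNReal.mul_div_le

theorem upperLIntegral_lintegral_inter_fiber_simpleFunc_le (hm : LipschitzWith L m) (A : Set X)
    (ψ : SimpleFunc X ℝ≥0) :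
    upperLIntegral volume (fun t => ∫⁻ x in A ∩ m ⁻¹' {t}, ψ x ∂μH[1]) ≤
      L * ∫⁻ x in A, ψ x ∂μH[2] := by
  induction ψ using SimpleFunc.induction with
  | @const c S hS =>
    have hψ : ∀ x, ((SimpleFunc.piecewise S hS (.const X c) (.const X 0) x : ℝ≥0) : ℝ≥0∞) =
        S.indicator (fun _ => (c : ℝ≥0∞)) x := fun x => by
      by_cases hx : x ∈ S <;> simp [hx]
    have hfiber : ∀ t, S ∩ (A ∩ m ⁻¹' {t}) = A ∩ S ∩ m ⁻¹' {t} := fun t => by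
      rw [inter_comm, inter_right_comm]
    simp only [hψ, lintegral_indicator_const hS, Measure.restrict_apply hS, hfiber, inter_comm S A]
    calc upperLIntegral volume (fun t => c * μH[1] (A ∩ S ∩ m ⁻¹' {t}))
        ≤ c * upperLIntegral volume (fun t => μH[1] (A ∩ S ∩ m ⁻¹' {t})) :=
          upperLIntegral_const_mul_le _ _
      _ ≤ c * (L * μH[2] (A ∩ S)) := by
          gcongr; exact upperLIntegral_hausdorffMeasure_inter_fiber_le hm _
      _ = L * (c * μH[2] (A ∩ S)) := mul_left_comm ..
  | @add ψ φ _ hψ hφ =>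
    have hadd : ∀ μ : Measure X, ∀ B : Set X, ∫⁻ x in B, ↑((ψ + φ) x) ∂μ =
        ∫⁻ x in B, ψ x ∂μ + ∫⁻ x in B, φ x ∂μ := fun μ B => by
      simp only [SimpleFunc.coe_add, Pi.add_apply, ENNReal.coe_add]
      exact lintegral_add_left ψ.measurable.coe_nnreal_ennreal _
    simp only [hadd]
    calc upperLIntegral volume (fun t => ∫⁻ x in A ∩ m ⁻¹' {t}, ψ x ∂μH[1] +
          ∫⁻ x in A ∩ m ⁻¹' {t}, φ x ∂μH[1])
        ≤ L * ∫⁻ x in A, ψ x ∂μH[2] + L * ∫⁻ x in A, φ x ∂μH[2] :=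
          (upperLIntegral_add_le _ _).trans (add_le_add hψ hφ)
      _ = L * (∫⁻ x in A, ψ x ∂μH[2] + ∫⁻ x in A, φ x ∂μH[2]) := (mul_add ..).symm

theorem upperLIntegral_lintegral_inter_fiber_le (hm : LipschitzWith L m) (A : Set X)
    {g : X → ℝ≥0∞} (hg : Measurable g) :
    upperLIntegral volume (fun t => ∫⁻ x in A ∩ m ⁻¹' {t}, g x ∂μH[1]) ≤
      L * ∫⁻ x in A, g x ∂μH[2] := by
  have hψ : ∀ n, Measurable fun x => (SimpleFunc.eapproxDiff g n x : ℝ≥0∞) :=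
    fun n => (SimpleFunc.eapproxDiff g n).measurable.coe_nnreal_ennreal
  have hg_eq : g = fun x => ∑' n, (SimpleFunc.eapproxDiff g n x : ℝ≥0∞) :=
    funext fun x => (SimpleFunc.tsum_eapproxDiff g hg x).symm
  rw [hg_eq]
  simp only [lintegral_tsum fun n => (hψ n).aemeasurable]
  calc upperLIntegral volume
        (fun t => ∑' n, ∫⁻ x in A ∩ m ⁻¹' {t}, SimpleFunc.eapproxDiff g n x ∂μH[1])
      ≤ ∑' n, upperLIntegral volume
        (fun t => ∫⁻ x in A ∩ m ⁻¹' {t}, SimpleFunc.eapproxDiff g n x ∂μH[1]) :=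
        upperLIntegral_tsum_le _
    _ ≤ ∑' n, L * ∫⁻ x in A, SimpleFunc.eapproxDiff g n x ∂μH[2] :=
        ENNReal.tsum_le_tsum fun n => upperLIntegral_lintegral_inter_fiber_simpleFunc_le hm A _
    _ = L * ∑' n, ∫⁻ x in A, SimpleFunc.eapproxDiff g n x ∂μH[2] := ENNReal.tsum_mul_left

end Coarea

end MeasureTheory

theorem stmt3_general {X : Type*} [MetricSpace X] [MeasurableSpace X] [BorelSpace X]
    (A : Set X) (m : X → ℝ) (L : ℝ≥0) (hm : LipschitzWith L m)
    (g : X → ℝ≥0∞) (hg : Measurable g) :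
    ∫⁻ t : ℝ, (∫⁻ x in A ∩ m ⁻¹' {t}, g x ∂(μH[1] : Measure X)) ≤
      ENNReal.ofReal (4 * (L : ℝ) / Real.pi) *
        ∫⁻ x in A, g x ∂((ENNReal.ofReal (Real.pi / 4)) • (μH[2] : Measure X)) := by
  have hconst : ENNReal.ofReal (4 * (L : ℝ) / Real.pi) * ENNReal.ofReal (Real.pi / 4) = L := by
    rw [← ENNReal.ofReal_mul (by positivity), ← ENNReal.ofReal_coe_nnreal]
    congr 1
    field_simp
  rw [Measure.restrict_smul, lintegral_smul_measure, smul_eq_mul, ← mul_assoc, hconst]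
  exact (lintegral_le_upperLIntegral _).trans (upperLIntegral_lintegral_inter_fiber_le hm A hg)

/-- Coarea inequality: for `A ⊂ X` Borel, `m : X → ℝ` an `L`-Lipschitz function and
`g : A → [0,∞]` Borel, one has
`∫_ℝ ∫_{A ∩ m⁻¹(t)} g dℋ¹ dt ≤ (4L/π) ∫_A g dℋ²`,
where `ℋ¹ = μH[1]` and `ℋ²` is the Hausdorff 2-measure with normalization `π/4`
(i.e. `(π/4) • μH[2]`). -/
theorem stmt3 {X : Type*} [MetricSpace X] [MeasurableSpace X] [BorelSpace X]
    (A : Set X) (hA : MeasurableSet A) (m : X → ℝ) (L : ℝ≥0) (hm : LipschitzWith L m)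
    (g : X → ℝ≥0∞) (hg : Measurable g) :
    ∫⁻ t : ℝ, (∫⁻ x in A ∩ m ⁻¹' {t}, g x ∂(μH[1] : Measure X)) ≤
      ENNReal.ofReal (4 * (L : ℝ) / Real.pi) *
        ∫⁻ x in A, g x ∂((ENNReal.ofReal (Real.pi / 4)) • (μH[2] : Measure X)) :=
  stmt3_general A m L hm g hg
end

section
/- Let X be a metric space with locally finite Hausdorff 2-measure satisfying the upper mass bound ℋ²(B(x,r)) ≤ C_U r² for all x ∈ X and r > 0. Then for every x ∈ X and radii 0 < 10r < R with X \ B(x,R) nonempty, the conformal 2-modulus of the family of paths joining the closed ball B̄(x,r) to X \ B(x,R) inside B̄(x,R) is at most 8·C_U / log₂(R/r). -/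
/-!
On the dyadic annuli `2^k r ≤ d(y,x) < 2^(k+1) r`, `k < N = ⌊log₂(R/r)⌋`, put `ρ = 1/(N 2^k r)`.
The distance to `x` is `1`-Lipschitz along an arc-length parametrization, so a curve from
`B̄(x,r)` to `X ∖ B(x,R)` spends length at least `2^k r` in the `k`-th annulus, and `∫_γ ρ ≥ 1`.
The annuli are disjoint and the `k`-th lies in `B(x, 2^(k+1) r)`, so
`∫ ρ² ≤ ∑ₖ (N 2^k r)⁻² C_U 4^(k+1) r² = 4 C_U / N ≤ 8 C_U / log₂(R/r)`.
-/

open MeasureTheory Metric Set Filter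
open scoped ENNReal NNReal Topology

/-- A continuous curve parametrized by `[0,1]`. -/
structure Curve (X : Type*) [MetricSpace X] where
  toFun : ℝ → X
  contOn : ContinuousOn toFun (Set.Icc 0 1)

/-- `(L, g, φ)` is a `1`-Lipschitz (arc-length type) parametrization of the curve `γ`. -/
def IsUnitSpeedParam {X : Type*} [MetricSpace X] (γ : Curve X) (L : ℝ) (g : ℝ → X)
    (φ : ℝ → ℝ) : Prop :=
  0 ≤ L ∧ LipschitzOnWith 1 g (Set.Icc 0 L) ∧ MonotoneOn φ (Set.Icc 0 1) ∧
    Set.MapsTo φ (Set.Icc 0 1) (Set.Icc 0 L) ∧ Set.SurjOn φ (Set.Icc 0 1) (Set.Icc 0 L) ∧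
    Set.EqOn γ.toFun (g ∘ φ) (Set.Icc 0 1)

/-- The line integral `∫_γ ρ ds` of a nonnegative function along a curve, defined via
`1`-Lipschitz parametrizations; it equals `∞` when `γ` is not rectifiable. -/
noncomputable def curveIntegralENN {X : Type*} [MetricSpace X] (ρ : X → ℝ≥0∞) (γ : Curve X) :
    ℝ≥0∞ :=
  ⨅ (L : ℝ) (g : ℝ → X) (φ : ℝ → ℝ) (_ : IsUnitSpeedParam γ L g φ),
    ∫⁻ t in Set.Icc 0 L, ρ (g t)

/-- Admissibility of a Borel function `ρ` for the curve family `Γ`. -/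
def Admissible {X : Type*} [MetricSpace X] [MeasurableSpace X] (ρ : X → ℝ≥0∞)
    (Γ : Set (Curve X)) : Prop :=
  Measurable ρ ∧ ∀ γ ∈ Γ, 1 ≤ curveIntegralENN ρ γ

/-- The conformal (2-)modulus of a curve family with respect to the measure `μ`. -/
noncomputable def modulus {X : Type*} [MetricSpace X] [MeasurableSpace X] (μ : Measure X)
    (Γ : Set (Curve X)) : ℝ≥0∞ :=
  ⨅ (ρ : X → ℝ≥0∞) (_ : Admissible ρ Γ), ∫⁻ x, ρ x ^ 2 ∂μ

/-- The family of curves joining `E` and `F` within `G`. -/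
def JoiningCurves {X : Type*} [MetricSpace X] (E F G : Set X) : Set (Curve X) :=
  {γ | (∀ t ∈ Set.Icc (0:ℝ) 1, γ.toFun t ∈ G) ∧
    (∃ t ∈ Set.Icc (0:ℝ) 1, γ.toFun t ∈ E) ∧ ∃ t ∈ Set.Icc (0:ℝ) 1, γ.toFun t ∈ F}

/-- The image of a curve family under a map. -/
def mapCurves {X Y : Type*} [MetricSpace X] [MetricSpace Y] (F : X → Y)
    (Γ : Set (Curve X)) : Set (Curve Y) :=
  {η | ∃ γ ∈ Γ, Set.EqOn η.toFun (F ∘ γ.toFun) (Set.Icc 0 1)}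

/-- Hausdorff 2-measure with the paper's normalization constant `a₂ = π/4`. -/
noncomputable def paperH2 (X : Type*) [MetricSpace X] [MeasurableSpace X] [BorelSpace X] :
    Measure X := (ENNReal.ofReal (Real.pi / 4)) • μH[2]

open Finset Function in
lemma Finset.sum_indicator_sq_of_pairwise_disjoint {ι α M : Type*} [CommSemiring M]
    {A : ι → Set α} (hA : Pairwise (Disjoint on A)) (s : Finset ι) (f : ι → α → M) (y : α) :
    (∑ i ∈ s, (A i).indicator (f i) y) ^ 2 = ∑ i ∈ s, (A i).indicator (fun z => f i z ^ 2) y := by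
  by_cases h : ∃ j ∈ s, y ∈ A j
  · obtain ⟨j, hj, hyj⟩ := h
    have hout : ∀ i ≠ j, y ∉ A i := fun i hij hyi => (hA hij).le_bot ⟨hyi, hyj⟩
    rw [sum_eq_single_of_mem j hj fun i _ hij => indicator_of_notMem (hout i hij) _,
      sum_eq_single_of_mem j hj fun i _ hij => indicator_of_notMem (hout i hij) _,
      indicator_of_mem hyj, indicator_of_mem hyj]
  · push Not at h
    simp [sum_eq_zero fun i hi => indicator_of_notMem (h i hi) _]

lemma LipschitzWith.ofReal_sub_le_volume_uIcc_inter_preimage_Ico {f : ℝ → ℝ}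
    (hf : LipschitzWith 1 f) {s₀ s₁ a b : ℝ} (h₀ : f s₀ ≤ a) (h₁ : b ≤ f s₁) :
    ENNReal.ofReal (b - a) ≤ volume (uIcc s₀ s₁ ∩ f ⁻¹' Ico a b) := by
  have hsub : Ico a b ⊆ f '' (uIcc s₀ s₁ ∩ f ⁻¹' Ico a b) := fun c hc => by
    obtain ⟨s, hs, rfl⟩ := intermediate_value_uIcc hf.continuous.continuousOn
      (mem_uIcc.2 (Or.inl ⟨h₀.trans hc.1, hc.2.le.trans h₁⟩))
    exact ⟨s, ⟨hs, hc⟩, rfl⟩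
  calc ENNReal.ofReal (b - a) = volume (Ico a b) := Real.volume_Ico.symm
    _ ≤ volume (f '' (uIcc s₀ s₁ ∩ f ⁻¹' Ico a b)) := measure_mono hsub
    _ ≤ volume (uIcc s₀ s₁ ∩ f ⁻¹' Ico a b) := by
      simpa [hausdorffMeasure_real] using hf.hausdorffMeasure_image_le zero_le_one _

noncomputable def stepFunction (t : ℕ → ℝ) (c : ℕ → ℝ≥0∞) (N : ℕ) (s : ℝ) : ℝ≥0∞ :=
  ∑ k ∈ Finset.range N, (Ico (t k) (t (k + 1))).indicator (fun _ => c k) s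

section stepFunction

variable {t : ℕ → ℝ} (c : ℕ → ℝ≥0∞) (N : ℕ)

lemma measurable_stepFunction : Measurable (stepFunction t c N) :=
  Finset.measurable_sum _ fun _ _ => measurable_const.indicator measurableSet_Ico

lemma stepFunction_sq (ht : Monotone t) (s : ℝ) :
    stepFunction t c N s ^ 2 = stepFunction t (fun k => c k ^ 2) N s :=
  Finset.sum_indicator_sq_of_pairwise_disjoint ht.pairwise_disjoint_on_Ico_succ _ _ s

lemma LipschitzWith.sum_mul_ofReal_sub_le_setLIntegral_stepFunction (ht : Monotone t)
    {f : ℝ → ℝ} (hf : LipschitzWith 1 f) {s₀ s₁ : ℝ} (h₀ : f s₀ ≤ t 0) (h₁ : t N ≤ f s₁) :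
    ∑ k ∈ Finset.range N, c k * ENNReal.ofReal (t (k + 1) - t k) ≤
      ∫⁻ s in uIcc s₀ s₁, stepFunction t c N (f s) := by
  unfold stepFunction
  rw [lintegral_finsetSum (f := fun k s => (Ico (t k) (t (k + 1))).indicator (fun _ => c k) (f s))
    _ fun k _ => (measurable_const.indicator measurableSet_Ico).comp hf.continuous.measurable]
  refine Finset.sum_le_sum fun k hk => ?_
  rw [lintegral_indicator_const_comp hf.continuous.measurable measurableSet_Ico,
    Measure.restrict_apply (hf.continuous.measurable measurableSet_Ico), inter_comm]
  gcongr
  exact hf.ofReal_sub_le_volume_uIcc_inter_preimage_Ico (h₀.trans (ht k.zero_le))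
    ((ht (Finset.mem_range.1 hk)).trans h₁)

lemma sum_mul_ofReal_sub_le_curveIntegralENN {X : Type*} [MetricSpace X] (ht : Monotone t)
    {x : X} {γ : Curve X} {a b : ℝ} (ha : a ∈ Icc (0 : ℝ) 1) (hb : b ∈ Icc (0 : ℝ) 1)
    (hγa : γ.toFun a ∈ closedBall x (t 0)) (hγb : γ.toFun b ∉ ball x (t N)) :
    ∑ k ∈ Finset.range N, c k * ENNReal.ofReal (t (k + 1) - t k) ≤
      curveIntegralENN (fun y => stepFunction t c N (dist y x)) γ := by
  refine le_iInf₂ fun L g => le_iInf₂ fun φ hp => ?_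
  obtain ⟨-, hg, -, hφ, -, hγ⟩ := hp
  obtain ⟨f, hf, hgf⟩ := ((LipschitzWith.dist_left x).comp_lipschitzOnWith hg).extend_real
  rw [one_mul] at hf
  have hsub : uIcc (φ a) (φ b) ⊆ Icc 0 L := ordConnected_Icc.uIcc_subset (hφ ha) (hφ hb)
  have hf_at : ∀ s ∈ Icc (0 : ℝ) 1, f (φ s) = dist (γ.toFun s) x := fun s hs => by
    rw [hγ hs, ← hgf (hφ hs)]; rfl
  calc _ ≤ ∫⁻ s in uIcc (φ a) (φ b), stepFunction t c N (f s) :=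
        hf.sum_mul_ofReal_sub_le_setLIntegral_stepFunction c N ht
          (by rw [hf_at a ha]; exact hγa) (by rw [hf_at b hb]; exact not_lt.1 hγb)
    _ = ∫⁻ s in uIcc (φ a) (φ b), stepFunction t c N (dist (g s) x) :=
        setLIntegral_congr_fun measurableSet_uIcc fun s hs => by rw [← hgf (hsub hs)]; rfl
    _ ≤ ∫⁻ s in Icc 0 L, stepFunction t c N (dist (g s) x) := lintegral_mono_set hsub

lemma lintegral_stepFunction_dist_sq_le {X : Type*} [MetricSpace X] [MeasurableSpace X]
    [OpensMeasurableSpace X] (μ : Measure X) (ht : Monotone t) (x : X) :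
    ∫⁻ y, stepFunction t c N (dist y x) ^ 2 ∂μ ≤
      ∑ k ∈ Finset.range N, c k ^ 2 * μ (ball x (t (k + 1))) := by
  have hdist : Measurable fun y => dist y x := (continuous_id.dist continuous_const).measurable
  simp_rw [stepFunction_sq c N ht]
  unfold stepFunction
  rw [lintegral_finsetSum
    (f := fun k y => (Ico (t k) (t (k + 1))).indicator (fun _ => c k ^ 2) (dist y x))
    _ fun k _ => (measurable_const.indicator measurableSet_Ico).comp hdist]
  refine Finset.sum_le_sum fun k _ => ?_
  rw [lintegral_indicator_const_comp hdist measurableSet_Ico]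
  exact mul_le_mul_right (measure_mono fun y hy => mem_ball.2 hy.2) _

end stepFunction

/-- Discretization of the test function `y ↦ 1 / (d(y,x) log₂(R/r))`: on the dyadic annulus
`2^k r ≤ d(y,x) < 2^(k+1) r`, `k < N`, it takes the value `1 / (N 2^k r)`. -/
noncomputable def dyadicTestFunction {X : Type*} [MetricSpace X] (x : X) (r : ℝ) (N : ℕ) :
    X → ℝ≥0∞ :=
  fun y => stepFunction (fun k => 2 ^ k * r) (fun k => ENNReal.ofReal (1 / (N * (2 ^ k * r)))) N
    (dist y x)

section dyadic

variable {X : Type*} [MetricSpace X] {x : X} {r : ℝ} {N : ℕ}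

lemma monotone_two_pow_mul (hr : 0 ≤ r) : Monotone fun k : ℕ => (2 : ℝ) ^ k * r :=
  fun _ _ h => mul_le_mul_of_nonneg_right (pow_le_pow_right₀ one_le_two h) hr

lemma admissible_dyadicTestFunction [MeasurableSpace X] [OpensMeasurableSpace X] {R : ℝ}
    (hr : 0 < r) (hN : 0 < N) (hNR : 2 ^ N * r ≤ R) (G : Set X) :
    Admissible (dyadicTestFunction x r N) (JoiningCurves (closedBall x r) (ball x R)ᶜ G) := by
  refine ⟨(measurable_stepFunction _ N).comp (continuous_id.dist continuous_const).measurable, ?_⟩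
  rintro γ ⟨-, ⟨a, ha, hγa⟩, b, hb, hγb⟩
  have hterm : ∀ k ∈ Finset.range N, ENNReal.ofReal (1 / (N * (2 ^ k * r))) *
      ENNReal.ofReal (2 ^ (k + 1) * r - 2 ^ k * r) = ENNReal.ofReal (1 / N) := fun k _ => by
    rw [← ENNReal.ofReal_mul (by positivity)]
    congr 1
    field_simp
    ring
  calc (1 : ℝ≥0∞) = N * ENNReal.ofReal (1 / N) := by
        rw [← ENNReal.ofReal_natCast, ← ENNReal.ofReal_mul (by positivity),
          mul_one_div_cancel (by positivity), ENNReal.ofReal_one]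
    _ = _ := by rw [Finset.sum_congr rfl hterm, Finset.sum_const, Finset.card_range, nsmul_eq_mul]
    _ ≤ _ := sum_mul_ofReal_sub_le_curveIntegralENN _ N (monotone_two_pow_mul hr.le) ha hb
        (by simpa using hγa) fun h => hγb (ball_subset_ball hNR h)

lemma lintegral_dyadicTestFunction_sq_le [MeasurableSpace X] [OpensMeasurableSpace X]
    (μ : Measure X) {C : ℝ} (hμ : ∀ s, 0 < s → μ (ball x s) ≤ ENNReal.ofReal (C * s ^ 2))
    (hr : 0 < r) :
    ∫⁻ y, dyadicTestFunction x r N y ^ 2 ∂μ ≤ ENNReal.ofReal (4 * C / N) := by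
  have hterm : ∀ k ∈ Finset.range N, ENNReal.ofReal (1 / (N * (2 ^ k * r))) ^ 2 *
      ENNReal.ofReal (C * (2 ^ (k + 1) * r) ^ 2) = ENNReal.ofReal (4 * C / N ^ 2) := fun k _ => by
    rw [← ENNReal.ofReal_pow (by positivity), ← ENNReal.ofReal_mul (by positivity)]
    congr 1
    rcases N.eq_zero_or_pos with rfl | hN
    · simp
    field_simp
    ring
  calc _ ≤ ∑ k ∈ Finset.range N, ENNReal.ofReal (1 / (N * (2 ^ k * r))) ^ 2 *
        μ (ball x (2 ^ (k + 1) * r)) :=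
        lintegral_stepFunction_dist_sq_le _ N μ (monotone_two_pow_mul hr.le) x
    _ ≤ ∑ k ∈ Finset.range N, ENNReal.ofReal (1 / (N * (2 ^ k * r))) ^ 2 *
        ENNReal.ofReal (C * (2 ^ (k + 1) * r) ^ 2) :=
        Finset.sum_le_sum fun k _ => mul_le_mul_right (hμ _ (by positivity)) _
    _ = ENNReal.ofReal (4 * C / N) := by
        rw [Finset.sum_congr rfl hterm, Finset.sum_const, Finset.card_range, nsmul_eq_mul,
          ← ENNReal.ofReal_natCast, ← ENNReal.ofReal_mul (by positivity)]
        congr 1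
        rcases N.eq_zero_or_pos with rfl | hN
        · simp
        field_simp

end dyadic

lemma floor_logb_two_spec {q : ℝ} (hq : 2 ≤ q) :
    0 < ⌊Real.logb 2 q⌋₊ ∧ 2 ^ ⌊Real.logb 2 q⌋₊ ≤ q ∧ Real.logb 2 q ≤ 2 * ⌊Real.logb 2 q⌋₊ := by
  have hlog : 1 ≤ Real.logb 2 q := by
    rwa [Real.le_logb_iff_rpow_le one_lt_two (by linarith), Real.rpow_one]
  refine ⟨Nat.floor_pos.2 hlog, ?_, ?_⟩
  · calc (2 : ℝ) ^ ⌊Real.logb 2 q⌋₊ ≤ 2 ^ Real.logb 2 q := by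
          rw [← Real.rpow_natCast]
          exact Real.rpow_le_rpow_of_exponent_le one_le_two (Nat.floor_le (by linarith))
      _ = q := Real.rpow_logb two_pos (by norm_num) (by linarith)
  · have := Nat.lt_floor_add_one (Real.logb 2 q)
    have : (1 : ℝ) ≤ ⌊Real.logb 2 q⌋₊ := by exact_mod_cast Nat.floor_pos.2 hlog
    linarith

theorem stmt4_general {X : Type*} [MetricSpace X] [MeasurableSpace X] [BorelSpace X]
    (C_U : ℝ) (hC : 0 < C_U)
    (hmass : ∀ (x : X) (r : ℝ), 0 < r → paperH2 X (ball x r) ≤ ENNReal.ofReal (C_U * r ^ 2))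
    (x : X) (r R : ℝ) (hr : 0 < r) (hR : 10 * r < R) :
    modulus (paperH2 X) (JoiningCurves (closedBall x r) ((ball x R)ᶜ) (closedBall x R)) ≤
      ENNReal.ofReal (8 * C_U / Real.logb 2 (R / r)) := by
  obtain ⟨hN, hNR, hLN⟩ := floor_logb_two_spec (q := R / r) (by rw [le_div_iff₀ hr]; linarith)
  set N := ⌊Real.logb 2 (R / r)⌋₊
  have hNR' : 2 ^ N * r ≤ R := by rwa [le_div_iff₀ hr] at hNR
  calc _ ≤ ∫⁻ y, dyadicTestFunction x r N y ^ 2 ∂paperH2 X :=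
        iInf₂_le (dyadicTestFunction x r N) (admissible_dyadicTestFunction hr hN hNR' _)
    _ ≤ ENNReal.ofReal (4 * C_U / N) := lintegral_dyadicTestFunction_sq_le _ (hmass x) hr
    _ ≤ ENNReal.ofReal (8 * C_U / Real.logb 2 (R / r)) := by
        refine ENNReal.ofReal_le_ofReal ?_
        have hlog : 0 < Real.logb 2 (R / r) :=
          Real.logb_pos one_lt_two (by rw [lt_div_iff₀ hr]; linarith)
        rw [div_le_div_iff₀ (by exact_mod_cast hN) hlog]
        nlinarith

/-- Under the upper mass bound `ℋ²(B(x,r)) ≤ C_U r²`, the modulus of the family of curves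
joining `B̄(x,r)` to `X ∖ B(x,R)` inside `B̄(x,R)` is at most `8 C_U / log₂(R/r)`. -/
theorem stmt4 {X : Type*} [MetricSpace X] [MeasurableSpace X] [BorelSpace X]
    (C_U : ℝ) (hC : 0 < C_U)
    (hmass : ∀ (x : X) (r : ℝ), 0 < r → paperH2 X (ball x r) ≤ ENNReal.ofReal (C_U * r ^ 2))
    (x : X) (r R : ℝ) (hr : 0 < r) (hR : 10 * r < R)
    (hne : ((ball x R)ᶜ : Set X).Nonempty) :
    modulus (paperH2 X) (JoiningCurves (closedBall x r) ((ball x R)ᶜ) (closedBall x R)) ≤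
      ENNReal.ofReal (8 * C_U / Real.logb 2 (R / r)) :=
  stmt4_general C_U hC hmass x r R hr hR
end

section
/- In the plane ℝ² with Lebesgue measure, let Q = [0,1]², let Γ₁ be the family of horizontal segments [0,1]×{t}, t ∈ [0,1], and suppose E ⊂ Q is a measurable set with |Q \ E| ≤ 1/M. If ρ : Q → [0,∞] is Borel, vanishes a.e. on E, and satisfies ∫_{[0,1]×{t}} ρ dℋ¹ ≥ 1 for every t ∈ [0,1], then ∫_Q ρ² dx ≥ M. -/
open MeasureTheory Set
open scoped ENNReal

/-!
By Fubini, `ρ` has integral at least `1` over `Q`, and all of it lives on `Q \ E`. Cauchy–Schwarz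
on `Q \ E` then gives `1 ≤ |Q \ E| · ∫_Q ρ² ≤ (1 / M) · ∫_Q ρ²`.
-/

theorem ENNReal.ofReal_le_of_one_le_mul {M : ℝ} {a b : ℝ≥0∞} (h : 1 ≤ a * b)
    (ha : a ≤ ENNReal.ofReal (1 / M)) : ENNReal.ofReal M ≤ b := by
  rcases le_or_gt M 0 with hM | hM
  · simp [ENNReal.ofReal_of_nonpos hM]
  rw [one_div, ENNReal.ofReal_inv_of_pos hM] at ha
  have := h.trans (mul_le_mul_left ha b)
  rwa [← ENNReal.div_eq_inv_mul, ENNReal.le_div_iff_mul_le (by simp [hM]) (by simp),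
    one_mul] at this

theorem sq_lintegral_le_measure_univ_mul_lintegral_sq {α : Type*} [MeasurableSpace α]
    {μ : Measure α} {f : α → ℝ≥0∞} (hf : AEMeasurable f μ) :
    (∫⁻ x, f x ∂μ) ^ 2 ≤ μ univ * ∫⁻ x, f x ^ 2 ∂μ := by
  have hCS := ENNReal.lintegral_mul_le_Lp_mul_Lq μ Real.HolderConjugate.two_two hf
    (aemeasurable_const (b := (1 : ℝ≥0∞)))
  simp only [Pi.mul_apply, mul_one, ENNReal.one_rpow, lintegral_const, one_mul] at hCS
  calc (∫⁻ x, f x ∂μ) ^ 2 ≤ ((∫⁻ x, f x ^ (2:ℝ) ∂μ) ^ (1 / 2 : ℝ) * μ univ ^ (1 / 2 : ℝ)) ^ 2 :=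
        pow_le_pow_left₀ bot_le hCS 2
    _ = μ univ * ∫⁻ x, f x ^ 2 ∂μ := by
        simp_rw [mul_pow, ← ENNReal.rpow_natCast, ← ENNReal.rpow_mul]
        norm_num [mul_comm]

theorem setLIntegral_le_setLIntegral_diff {α : Type*} [MeasurableSpace α]
    {μ : Measure α} {f : α → ℝ≥0∞} {s t : Set α} (hf : ∀ᵐ x ∂μ.restrict t, f x = 0) :
    ∫⁻ x in s, f x ∂μ ≤ ∫⁻ x in s \ t, f x ∂μ :=
  calc ∫⁻ x in s, f x ∂μ ≤ ∫⁻ x in (s \ t) ∪ t, f x ∂μ := lintegral_mono_set (by simp)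
    _ ≤ ∫⁻ x in s \ t, f x ∂μ + ∫⁻ x in t, f x ∂μ := lintegral_union_le f _ _
    _ = ∫⁻ x in s \ t, f x ∂μ := by rw [lintegral_congr_ae hf, lintegral_zero, add_zero]

theorem mul_measure_le_setLIntegral_prod {α β : Type*} [MeasurableSpace α] [MeasurableSpace β]
    {μ : Measure α} {ν : Measure β} [SFinite μ] [SFinite ν] {f : α × β → ℝ≥0∞}
    (hf : Measurable f) {s : Set α} {t : Set β} {c : ℝ≥0∞}
    (hc : ∀ y ∈ t, c ≤ ∫⁻ x in s, f (x, y) ∂μ) :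
    c * ν t ≤ ∫⁻ z in s ×ˢ t, f z ∂μ.prod ν := by
  rw [setLIntegral_prod_symm f hf.aemeasurable, ← setLIntegral_const]
  exact setLIntegral_mono hf.lintegral_prod_left' hc

theorem stmt5_general (M : ℝ) (E : Set (ℝ × ℝ))
    (hsmall : volume ((Icc (0:ℝ) 1 ×ˢ Icc (0:ℝ) 1) \ E) ≤ ENNReal.ofReal (1 / M))
    (ρ : ℝ × ℝ → ℝ≥0∞) (hρ : Measurable ρ)
    (hvanish : ∀ᵐ x ∂(volume.restrict E), ρ x = 0)
    (hadm : ∀ t ∈ Icc (0:ℝ) 1, 1 ≤ ∫⁻ s in Icc (0:ℝ) 1, ρ (s, t)) :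
    ENNReal.ofReal M ≤ ∫⁻ x in Icc (0:ℝ) 1 ×ˢ Icc (0:ℝ) 1, ρ x ^ 2 := by
  set Q : Set (ℝ × ℝ) := Icc (0:ℝ) 1 ×ˢ Icc (0:ℝ) 1
  have hmass : 1 ≤ ∫⁻ x in Q \ E, ρ x := by
    have := mul_measure_le_setLIntegral_prod (μ := volume) (ν := volume) hρ hadm
    rw [Real.volume_Icc, sub_zero, ENNReal.ofReal_one, mul_one, ← Measure.volume_eq_prod] at this
    exact this.trans (setLIntegral_le_setLIntegral_diff hvanish)
  have hCS : 1 ≤ volume (Q \ E) * ∫⁻ x in Q \ E, ρ x ^ 2 := by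
    have := sq_lintegral_le_measure_univ_mul_lintegral_sq (μ := volume.restrict (Q \ E))
      hρ.aemeasurable
    rw [Measure.restrict_apply_univ] at this
    exact (one_le_pow_of_one_le' hmass 2).trans this
  exact (ENNReal.ofReal_le_of_one_le_mul hCS hsmall).trans (lintegral_mono_set sdiff_subset)

/-- If `ρ` vanishes a.e. on `E ⊆ Q = [0,1]²` with `|Q \ E| ≤ 1/M`, and `ρ` integrates to at
least `1` over every horizontal segment `[0,1] × {t}`, then `∫_Q ρ² ≥ M`. -/
theorem stmt5 (M : ℝ) (hM : 0 < M) (E : Set (ℝ × ℝ))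
    (hE : E ⊆ Icc (0:ℝ) 1 ×ˢ Icc (0:ℝ) 1) (hEm : MeasurableSet E)
    (hsmall : volume ((Icc (0:ℝ) 1 ×ˢ Icc (0:ℝ) 1) \ E) ≤ ENNReal.ofReal (1 / M))
    (ρ : ℝ × ℝ → ℝ≥0∞) (hρ : Measurable ρ)
    (hvanish : ∀ᵐ x ∂(volume.restrict E), ρ x = 0)
    (hadm : ∀ t ∈ Icc (0:ℝ) 1, 1 ≤ ∫⁻ s in Icc (0:ℝ) 1, ρ (s, t)) :
    ENNReal.ofReal M ≤ ∫⁻ x in Icc (0:ℝ) 1 ×ˢ Icc (0:ℝ) 1, ρ x ^ 2 :=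
  stmt5_general M E hsmall ρ hρ hvanish hadm
end

section
/- Let C be a symmetric convex body in ℝ² and let E ⊂ C be an ellipse centered at the origin of maximal Lebesgue area among ellipses contained in C. Then C ⊂ √2 · E. -/
/-!
Normalising by `T`, the unit disc is an ellipse of maximal area in the symmetric convex body
`K = T⁻¹ C`. If `K` contained a point `y` with `‖y‖ = R > √2`, it would contain the convex hull of
the disc and `±y`. This hull contains the ellipse with semi-axes `a = R / √2` along `y` and
`b = R / √(2 (R² - 1))` across it, which lies between the tangent lines from `±y` to the circle
because `a² + b² (R² - 1) = R²`. Its area `π a b` exceeds `π` since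
`a² b² = R⁴ / (4 (R² - 1)) > 1`, contradicting maximality.
-/

open MeasureTheory Metric Set
open scoped Pointwise RealInnerProductSpace

theorem exists_weight_mem_homothetic_ball {R a b m s : ℝ} (hR : 1 < R) (ha : 1 ≤ a) (hb : 0 < b)
    (hab : a ^ 2 + b ^ 2 * (R ^ 2 - 1) ≤ R ^ 2) (hm0 : 0 ≤ m) (hm1 : m ≤ 1)
    (hs0 : 0 ≤ s) (hs : s ≤ 1 - m ^ 2) :
    ∃ t : ℝ, 0 ≤ t ∧ t < 1 ∧ (a * m - t * R) ^ 2 + b ^ 2 * s ≤ (1 - t) ^ 2 := by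
  have hR0 : 0 < R := by linarith
  have hden : 0 < R ^ 2 - 1 := by nlinarith
  have hb1 : b ^ 2 ≤ 1 := by nlinarith
  have haR : a < R := by nlinarith [mul_pos (pow_pos hb 2) hden]
  rcases le_or_gt (R * a * m) 1 with h | h
  · refine ⟨0, le_rfl, one_pos, ?_⟩
    have hRm : R * m ≤ 1 := by nlinarith [mul_nonneg (mul_nonneg hR0.le hm0) (sub_nonneg.2 ha)]
    have hR2m2 : R ^ 2 * m ^ 2 ≤ 1 := by nlinarith [mul_nonneg hR0.le hm0]
    nlinarith [mul_nonneg (sub_nonneg.2 hb1) (sub_nonneg.2 hR2m2)]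
  · have ham : a * m < R := by nlinarith [mul_le_of_le_one_right (by linarith : (0:ℝ) ≤ a) hm1]
    -- this `t` minimises `(a * m - t * R) ^ 2 - (1 - t) ^ 2`
    refine ⟨(R * a * m - 1) / (R ^ 2 - 1), by positivity,
      (div_lt_one hden).2 (by nlinarith [mul_lt_mul_of_pos_left ham hR0]), ?_⟩
    have hcs : (R ^ 2 - a ^ 2) * (1 - m ^ 2) ≤ (R - a * m) ^ 2 := by
      nlinarith [sq_nonneg (a - R * m)]
    have hbs : b ^ 2 * s * (R ^ 2 - 1) ≤ (R ^ 2 - a ^ 2) * (1 - m ^ 2) := by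
      calc b ^ 2 * s * (R ^ 2 - 1) = b ^ 2 * (R ^ 2 - 1) * s := by ring
        _ ≤ (R ^ 2 - a ^ 2) * (1 - m ^ 2) := by
          apply mul_le_mul (by linarith) hs hs0 (by nlinarith)
    rw [← sub_nonneg]
    have heq : (1 - (R * a * m - 1) / (R ^ 2 - 1)) ^ 2
        - ((a * m - (R * a * m - 1) / (R ^ 2 - 1) * R) ^ 2 + b ^ 2 * s)
        = ((R - a * m) ^ 2 - b ^ 2 * s * (R ^ 2 - 1)) / (R ^ 2 - 1) := by
      field_simp; ring
    rw [heq]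
    apply div_nonneg _ hden.le
    linarith

theorem mem_of_norm_sub_smul_le {F : Type*} [SeminormedAddCommGroup F] [NormedSpace ℝ F]
    {K : Set F} (hK : Convex ℝ K) (hB : closedBall 0 1 ⊆ K) {v x : F} (hv : v ∈ K) {t : ℝ}
    (ht0 : 0 ≤ t) (ht1 : t < 1) (h : ‖x - t • v‖ ≤ 1 - t) : x ∈ K := by
  have ht : 0 < 1 - t := sub_pos.2 ht1
  have hq : (1 - t)⁻¹ • (x - t • v) ∈ K := by
    refine hB (mem_closedBall_zero_iff.2 ?_)
    rwa [norm_smul, Real.norm_eq_abs, abs_of_pos (inv_pos.2 ht), inv_mul_le_iff₀ ht, mul_one]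
  convert hK hv hq ht0 ht.le (by ring) using 1
  rw [smul_smul, mul_inv_cancel₀ ht.ne', one_smul, add_sub_cancel]

section Stretch

variable {E : Type*} [NormedAddCommGroup E] [InnerProductSpace ℝ E]

/-- The linear map scaling by `a` along `y` and by `b` on the orthogonal complement of `y`. -/
noncomputable def stretch (y : E) (a b : ℝ) : E →ₗ[ℝ] E :=
  b • LinearMap.id + ((a - b) / ‖y‖ ^ 2) • (innerₛₗ ℝ y).smulRight y

theorem stretch_apply (y : E) (a b : ℝ) (z : E) :
    stretch y a b z = b • z + ((a - b) / ‖y‖ ^ 2 * ⟪y, z⟫) • y := by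
  simp [stretch, mul_smul]

theorem stretch_one_one (y : E) : stretch y 1 1 = LinearMap.id := by
  ext z; simp [stretch_apply]

theorem stretch_comp_stretch {y : E} (hy : y ≠ 0) (a b a' b' : ℝ) :
    stretch y a b ∘ₗ stretch y a' b' = stretch y (a * a') (b * b') := by
  have hR : ‖y‖ ^ 2 ≠ 0 := by positivity
  ext z
  simp only [LinearMap.comp_apply, stretch_apply, inner_add_right, inner_smul_right,
    real_inner_self_eq_norm_sq]
  match_scalars
  · ring
  · field_simp; ring

noncomputable def stretchEquiv {y : E} (hy : y ≠ 0) {a b : ℝ} (ha : a ≠ 0) (hb : b ≠ 0) :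
    E ≃ₗ[ℝ] E :=
  LinearEquiv.ofLinearMap (stretch y a b) (stretch y a⁻¹ b⁻¹)
    (by rw [stretch_comp_stretch hy, mul_inv_cancel₀ ha, mul_inv_cancel₀ hb, stretch_one_one])
    (by rw [stretch_comp_stretch hy, inv_mul_cancel₀ ha, inv_mul_cancel₀ hb, stretch_one_one])

@[simp]
theorem coe_stretchEquiv {y : E} (hy : y ≠ 0) {a b : ℝ} (ha : a ≠ 0) (hb : b ≠ 0) :
    (stretchEquiv hy ha hb : E →ₗ[ℝ] E) = stretch y a b :=
  rfl

theorem norm_stretch_sub_smul_sq {y : E} (hy : y ≠ 0) (a b τ : ℝ) (z : E) :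
    ‖stretch y a b z - τ • y‖ ^ 2 =
      (a * (⟪y, z⟫ / ‖y‖) - τ * ‖y‖) ^ 2 + b ^ 2 * (‖z‖ ^ 2 - (⟪y, z⟫ / ‖y‖) ^ 2) := by
  have hR : ‖y‖ ≠ 0 := norm_ne_zero_iff.mpr hy
  rw [stretch_apply, add_sub_assoc, ← sub_smul, norm_add_sq_real]
  simp only [real_inner_smul_left, real_inner_smul_right, norm_smul, mul_pow,
    Real.norm_eq_abs, sq_abs, real_inner_comm z y]
  field_simp
  ring

theorem stretch_image_closedBall_subset {K : Set E} (hK : Convex ℝ K) (hB : closedBall 0 1 ⊆ K)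
    {y : E} (hy : y ∈ K) (hy' : -y ∈ K) (hR : 1 < ‖y‖) {a b : ℝ} (ha : 1 ≤ a) (hb : 0 < b)
    (hab : a ^ 2 + b ^ 2 * (‖y‖ ^ 2 - 1) ≤ ‖y‖ ^ 2) :
    stretch y a b '' closedBall 0 1 ⊆ K := by
  rintro _ ⟨z, hz, rfl⟩
  have hy0 : y ≠ 0 := norm_pos_iff.1 (by linarith)
  set c := ⟪y, z⟫ / ‖y‖ with hc
  have hz1 : ‖z‖ ≤ 1 := mem_closedBall_zero_iff.1 hz
  have hcz : |c| ≤ ‖z‖ := by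
    rw [hc, abs_div, abs_norm, div_le_iff₀ (by linarith), mul_comm]
    exact abs_real_inner_le_norm y z
  have hcz2 : c ^ 2 ≤ ‖z‖ ^ 2 := sq_le_sq' (abs_le.1 hcz).1 (abs_le.1 hcz).2
  obtain ⟨t, ht0, ht1, ht⟩ := exists_weight_mem_homothetic_ball hR ha hb hab (abs_nonneg c)
    (hcz.trans hz1) (sub_nonneg.2 hcz2) (by nlinarith [sq_abs c, norm_nonneg z])
  have hnorm (τ : ℝ) (hτ : (a * c - τ * ‖y‖) ^ 2 = (a * |c| - t * ‖y‖) ^ 2) :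
      ‖stretch y a b z - τ • y‖ ≤ 1 - t := by
    refine (pow_le_pow_iff_left₀ (norm_nonneg _) (by linarith) two_ne_zero).1 ?_
    rw [norm_stretch_sub_smul_sq hy0, ← hc, hτ]
    linarith
  rcases le_or_gt 0 c with hc0 | hc0
  · exact mem_of_norm_sub_smul_le hK hB hy ht0 ht1 (hnorm t (by rw [abs_of_nonneg hc0]))
  · refine mem_of_norm_sub_smul_le hK hB hy' ht0 ht1 ?_
    rw [smul_neg, ← neg_smul]
    exact hnorm (-t) (by rw [abs_of_neg hc0]; ring)

end Stretch

theorem det_stretch {y : EuclideanSpace ℝ (Fin 2)} (hy : y ≠ 0) (a b : ℝ) :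
    LinearMap.det (stretch y a b) = a * b := by
  have hR : ‖y‖ ^ 2 = y 0 ^ 2 + y 1 ^ 2 := by
    simp [EuclideanSpace.norm_sq_eq, Fin.sum_univ_two]
  have hR0 : y 0 ^ 2 + y 1 ^ 2 ≠ 0 := hR ▸ by positivity
  rw [← LinearMap.det_toMatrix (EuclideanSpace.basisFun (Fin 2) ℝ).toBasis, Matrix.det_fin_two]
  simp only [Fin.isValue, LinearMap.toMatrix_apply, OrthonormalBasis.coe_toBasis,
    EuclideanSpace.basisFun_apply, stretch_apply, EuclideanSpace.inner_single_right,
    Real.ringHom_apply, one_mul, map_add, map_smul, Finsupp.coe_add, Finsupp.coe_smul,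
    Pi.add_apply, Pi.smul_apply, OrthonormalBasis.coe_toBasis_repr_apply,
    EuclideanSpace.basisFun_repr, PiLp.single_eq_same, smul_eq_mul, mul_one, ne_eq, zero_ne_one,
    not_false_eq_true, PiLp.single_eq_of_ne, mul_zero, zero_add, one_ne_zero]
  rw [hR]
  field_simp
  ring

theorem exists_linearEquiv_one_lt_det_image_closedBall_subset
    {K : Set (EuclideanSpace ℝ (Fin 2))} (hK : Convex ℝ K) (hB : closedBall 0 1 ⊆ K)
    {y : EuclideanSpace ℝ (Fin 2)} (hy : y ∈ K) (hy' : -y ∈ K) (hR : √2 < ‖y‖) :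
    ∃ S : EuclideanSpace ℝ (Fin 2) ≃ₗ[ℝ] EuclideanSpace ℝ (Fin 2),
      S '' closedBall 0 1 ⊆ K ∧
        1 < LinearMap.det (S : EuclideanSpace ℝ (Fin 2) →ₗ[ℝ] EuclideanSpace ℝ (Fin 2)) := by
  set R := ‖y‖
  have hR2 : 2 < R ^ 2 := by
    nlinarith [Real.sq_sqrt (show (0:ℝ) ≤ 2 by norm_num), Real.sqrt_nonneg 2]
  have hR1 : 1 < R := by nlinarith [norm_nonneg y]
  have hden : 0 < R ^ 2 - 1 := by linarith
  have hy0 : y ≠ 0 := norm_pos_iff.1 (by linarith)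
  set a := √(R ^ 2 / 2)
  set b := √(R ^ 2 / (2 * (R ^ 2 - 1)))
  have ha2 : a ^ 2 = R ^ 2 / 2 := Real.sq_sqrt (by positivity)
  have hb2 : b ^ 2 = R ^ 2 / (2 * (R ^ 2 - 1)) := Real.sq_sqrt (by positivity)
  have ha : 0 < a := Real.sqrt_pos.2 (by positivity)
  have hb : 0 < b := Real.sqrt_pos.2 (by positivity)
  have hab : a ^ 2 + b ^ 2 * (R ^ 2 - 1) = R ^ 2 := by
    rw [ha2, hb2]; field_simp; ring
  -- `(a * b) ^ 2 - 1 = (R ^ 2 - 2) ^ 2 / (4 * (R ^ 2 - 1))`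
  have hdet : 1 < a * b := by
    have habsq : (a * b) ^ 2 = R ^ 4 / (4 * (R ^ 2 - 1)) := by
      rw [mul_pow, ha2, hb2]; field_simp; ring
    have : 1 < (a * b) ^ 2 := by
      rw [habsq, lt_div_iff₀ (by positivity)]
      nlinarith [mul_pos (sub_pos.2 hR2) (sub_pos.2 hR2)]
    nlinarith [mul_pos ha hb]
  refine ⟨stretchEquiv hy0 ha.ne' hb.ne', ?_, ?_⟩
  · exact stretch_image_closedBall_subset hK hB hy hy' hR1 (by nlinarith) hb hab.le
  · rwa [coe_stretchEquiv, det_stretch hy0]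

theorem addHaar_image_lt_image_trans {F : Type*} [NormedAddCommGroup F] [NormedSpace ℝ F]
    [FiniteDimensional ℝ F] [MeasurableSpace F] [BorelSpace F] (μ : Measure F)
    [μ.IsAddHaarMeasure] {s : Set F} (hs0 : μ s ≠ 0) (hs : μ s ≠ ⊤) (T S : F ≃ₗ[ℝ] F)
    (hS : 1 < |LinearMap.det (S : F →ₗ[ℝ] F)|) : μ (T '' s) < μ (S.trans T '' s) := by
  have hT : 0 < |LinearMap.det (T : F →ₗ[ℝ] F)| := abs_pos.2 (LinearEquiv.isUnit_det' T).ne_zero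
  change μ ((T : F →ₗ[ℝ] F) '' s) < μ (((T : F →ₗ[ℝ] F) ∘ₗ (S : F →ₗ[ℝ] F)) '' s)
  rw [Measure.addHaar_image_linearMap, Measure.addHaar_image_linearMap, LinearMap.det_comp,
    abs_mul, ENNReal.mul_lt_mul_iff_left hs0 hs, ENNReal.ofReal_lt_ofReal_iff (by positivity)]
  exact lt_mul_of_one_lt_right hT hS

theorem stmt10_general (C : Set (EuclideanSpace ℝ (Fin 2)))
    (hCconv : Convex ℝ C)
    (hCsymm : ∀ x ∈ C, -x ∈ C)
    (T : EuclideanSpace ℝ (Fin 2) ≃ₗ[ℝ] EuclideanSpace ℝ (Fin 2))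
    (E : Set (EuclideanSpace ℝ (Fin 2))) (hE : E = T '' closedBall 0 1)
    (hEC : E ⊆ C)
    (hmax : ∀ S : EuclideanSpace ℝ (Fin 2) ≃ₗ[ℝ] EuclideanSpace ℝ (Fin 2),
      (S '' closedBall 0 1) ⊆ C → volume (S '' closedBall 0 1) ≤ volume E) :
    C ⊆ (Real.sqrt 2) • E := by
  subst hE
  have hB : closedBall 0 1 ⊆ T ⁻¹' C := image_subset_iff.1 hEC
  have hnorm : ∀ x ∈ C, ‖T.symm x‖ ≤ √2 := by
    intro x hx
    by_contra! h
    obtain ⟨S, hSC, hS⟩ := exists_linearEquiv_one_lt_det_image_closedBall_subset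
      (hCconv.linear_preimage T.toLinearMap) hB (by simpa) (by simpa using hCsymm x hx) h
    have hST : S.trans T '' closedBall 0 1 ⊆ C := by
      rintro _ ⟨z, hz, rfl⟩
      exact hSC ⟨z, hz, rfl⟩
    refine (hmax _ hST).not_gt (addHaar_image_lt_image_trans volume ?_ ?_ T S ?_)
    · exact (measure_closedBall_pos volume 0 one_pos).ne'
    · exact measure_closedBall_lt_top.ne
    · exact hS.trans_le (le_abs_self _)
  rw [← image_smul_set, smul_unitClosedBall_of_nonneg (Real.sqrt_nonneg 2)]
  exact fun x hx => ⟨T.symm x, mem_closedBall_zero_iff.2 (hnorm x hx), T.apply_symm_apply x⟩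

/-- John's theorem in the plane: if `E` is an origin-centered ellipse of maximal Lebesgue
area contained in a symmetric convex body `C ⊂ ℝ²`, then `C ⊆ √2 • E`. -/
theorem stmt10 (C : Set (EuclideanSpace ℝ (Fin 2)))
    (hCcomp : IsCompact C) (hCconv : Convex ℝ C) (hCint : (interior C).Nonempty)
    (hCsymm : ∀ x ∈ C, -x ∈ C)
    (T : EuclideanSpace ℝ (Fin 2) ≃ₗ[ℝ] EuclideanSpace ℝ (Fin 2))
    (E : Set (EuclideanSpace ℝ (Fin 2))) (hE : E = T '' closedBall 0 1)
    (hEC : E ⊆ C)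
    (hmax : ∀ S : EuclideanSpace ℝ (Fin 2) ≃ₗ[ℝ] EuclideanSpace ℝ (Fin 2),
      (S '' closedBall 0 1) ⊆ C → volume (S '' closedBall 0 1) ≤ volume E) :
    C ⊆ (Real.sqrt 2) • E :=
  stmt10_general C hCconv hCsymm T E hE hEC hmax
end

section
/- Let ‖·‖ be a norm on ℝ² whose closed unit ball is C, let r > 0 be such that the Euclidean ball B(0,r) is the maximal-area ellipse contained in C, and let R > 0 scale so that C = {y : ‖y‖ ≤ R} (i.e. R = 1). Let J = ℋ²_‖·‖(C)/|C| = πR²/|C| be the ratio of the Hausdorff 2-measure in the norm ‖·‖ to Lebesgue measure. Then R²/r² ≥ J ≥ R²/(2r²); in particular the operator norm L = R/r of the identity from (ℝ²,Euclidean) to (ℝ²,‖·‖⁻¹-scaled) satisfies L²/J ≤ 2. -/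
/-!
If some `x ∈ C` had `‖x‖ = s > √2 r`, then `C ⊇ conv (B(0,r) ∪ {x, -x})` would contain the
ellipse with semi-axes `a = s/√2` along `x` and `b = rs/√(2(s² - r²))` across it, which touches
the four tangent lines from `±x` to the circle of radius `r`. Its area `πab` exceeds `πr²`, because
`4(s² - r²)((ab)² - r⁴) = r²(s² - 2r²)²`, contradicting maximality. Hence
`B(0,r) ⊆ C ⊆ B(0,√2 r)`, so `πr² ≤ |C| ≤ 2πr²`, which is the estimate for `J = π/|C|`.
-/

open MeasureTheory Metric Set

local notation "ℝ²" => EuclideanSpace ℝ (Fin 2)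

lemma sq_add_sq_le_or_cone {r s a b τ z : ℝ} (hs : 0 < s) (hrs : 2 * r ^ 2 < s ^ 2)
    (ha : 2 * a ^ 2 = s ^ 2) (hb : 2 * (s ^ 2 - r ^ 2) * b ^ 2 = r ^ 2 * s ^ 2) (ha₀ : 0 ≤ a)
    (hτ : 0 ≤ τ) (hτz : τ ^ 2 + z ^ 2 ≤ 1) :
    (a * τ) ^ 2 + (b * z) ^ 2 ≤ r ^ 2 ∨
      r ^ 2 ≤ s * (a * τ) ∧ a * τ < s ∧
        (s ^ 2 - r ^ 2) * (b * z) ^ 2 ≤ r ^ 2 * (s - a * τ) ^ 2 := by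
  have hd : 0 < s ^ 2 - r ^ 2 := by nlinarith
  have hz : z ^ 2 ≤ 1 - τ ^ 2 := by linarith
  have hbz : 2 * (s ^ 2 - r ^ 2) * (b * z) ^ 2 ≤ r ^ 2 * s ^ 2 * (1 - τ ^ 2) := by
    rw [mul_pow, ← mul_assoc, hb]; gcongr
  rcases le_total (s * (a * τ)) (r ^ 2) with hin | hout
  · left
    have hsτ : s ^ 2 * τ ^ 2 ≤ r ^ 2 := by
      have h₁ : s ^ 2 * (s ^ 2 * τ ^ 2) = 2 * (s * (a * τ)) ^ 2 := by
        linear_combination (-(s ^ 2 * τ ^ 2)) * ha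
      have h₂ : (s * (a * τ)) ^ 2 ≤ (r ^ 2) ^ 2 := pow_le_pow_left₀ (by positivity) hin 2
      have h₃ : 0 ≤ r ^ 2 * (s ^ 2 - 2 * r ^ 2) := mul_nonneg (sq_nonneg r) (by linarith)
      exact le_of_mul_le_mul_left (by nlinarith) (by positivity : 0 < s ^ 2)
    have haτ : 2 * (s ^ 2 - r ^ 2) * (a * τ) ^ 2 = (s ^ 2 - r ^ 2) * s ^ 2 * τ ^ 2 := by
      linear_combination ((s ^ 2 - r ^ 2) * τ ^ 2) * ha
    have h := mul_le_mul_of_nonneg_right hsτ (by linarith : (0 : ℝ) ≤ s ^ 2 - 2 * r ^ 2)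
    refine le_of_mul_le_mul_left ?_ (by positivity : 0 < 2 * (s ^ 2 - r ^ 2))
    linarith
  · right
    have haτ : a * τ < s := by nlinarith
    refine ⟨hout, haτ, ?_⟩
    have h : 2 * (s - a * τ) ^ 2 - s ^ 2 * (1 - τ ^ 2) = 2 * (s * τ - a) ^ 2 := by
      linear_combination (τ ^ 2 - 1) * ha
    nlinarith [mul_nonneg (sq_nonneg r) (sq_nonneg (s * τ - a))]

lemma sq_lt_mul_of_semiaxes {r s a b : ℝ} (hr : 0 < r) (hrs : 2 * r ^ 2 < s ^ 2)
    (ha : 2 * a ^ 2 = s ^ 2) (hb : 2 * (s ^ 2 - r ^ 2) * b ^ 2 = r ^ 2 * s ^ 2)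
    (ha₀ : 0 < a) (hb₀ : 0 < b) : r ^ 2 < a * b := by
  have hab : 4 * (s ^ 2 - r ^ 2) * (a * b) ^ 2 = r ^ 2 * s ^ 4 := by
    linear_combination (2 * (s ^ 2 - r ^ 2) * b ^ 2) * ha + s ^ 2 * hb
  have hgap : 0 < r ^ 2 * (s ^ 2 - 2 * r ^ 2) ^ 2 := by
    have : 0 < s ^ 2 - 2 * r ^ 2 := by linarith
    positivity
  refine lt_of_pow_lt_pow_left₀ 2 (by positivity) ?_
  nlinarith

section Convex
variable {E : Type*} [NormedAddCommGroup E] [InnerProductSpace ℝ E] {K : Set E} {r s : ℝ}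

lemma Convex.mem_of_norm_sub_smul_le (hK : Convex ℝ K) (hball : closedBall 0 r ⊆ K)
    {x p : E} (hx : x ∈ K) {t : ℝ} (ht₀ : 0 ≤ t) (ht₁ : t < 1)
    (hp : ‖p - t • x‖ ≤ (1 - t) * r) : p ∈ K := by
  have ht : 0 < 1 - t := sub_pos.mpr ht₁
  have hu : (1 - t)⁻¹ • (p - t • x) ∈ K := hball <| by
    rw [mem_closedBall_zero_iff, norm_smul, Real.norm_of_nonneg (inv_nonneg.mpr ht.le)]
    exact (inv_mul_le_iff₀ ht).mpr hp
  convert hK hx hu ht₀ ht.le (by ring) using 1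
  rw [smul_inv_smul₀ ht.ne']
  abel

lemma norm_smul_add_smul_sq {e f : E} (he : ‖e‖ = 1) (hf : ‖f‖ = 1) (hef : inner ℝ e f = 0)
    (α β : ℝ) : ‖α • e + β • f‖ ^ 2 = α ^ 2 + β ^ 2 := by
  simp [norm_add_sq_real, norm_smul, inner_smul_left, inner_smul_right, he, hf, hef]

/-- The hypotheses on `α, β` place `α • e + β • f` beyond the chord of contact and between the
tangents from `s • e` to the sphere of radius `r`. -/
lemma Convex.smul_add_smul_mem_of_cone (hK : Convex ℝ K) (hball : closedBall 0 r ⊆ K)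
    {e f : E} (he : ‖e‖ = 1) (hf : ‖f‖ = 1) (hef : inner ℝ e f = 0) (hx : s • e ∈ K)
    (hr : 0 ≤ r) (hs : 0 < s) {α β : ℝ} (hα : r ^ 2 ≤ s * α) (hαs : α < s)
    (hβ : (s ^ 2 - r ^ 2) * β ^ 2 ≤ r ^ 2 * (s - α) ^ 2) : α • e + β • f ∈ K := by
  have hd : 0 < s ^ 2 - r ^ 2 := by nlinarith
  set t := (s * α - r ^ 2) / (s ^ 2 - r ^ 2) with ht
  have ht₀ : 0 ≤ t := div_nonneg (by linarith) hd.le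
  have ht₁ : t < 1 := (div_lt_one hd).mpr (by nlinarith)
  refine hK.mem_of_norm_sub_smul_le hball hx ht₀ ht₁ ?_
  have hsub : α • e + β • f - t • s • e = (α - t * s) • e + β • f := by module
  have hsq : (s ^ 2 - r ^ 2) * (((1 - t) * r) ^ 2 - ((α - t * s) ^ 2 + β ^ 2))
      = r ^ 2 * (s - α) ^ 2 - (s ^ 2 - r ^ 2) * β ^ 2 := by
    rw [ht]; field_simp; ring
  rw [hsub, ← pow_le_pow_iff_left₀ (norm_nonneg _) (by nlinarith) two_ne_zero,
    norm_smul_add_smul_sq he hf hef]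
  nlinarith

lemma Convex.smul_add_smul_mem_of_ellipse (hK : Convex ℝ K) (hsymm : ∀ x ∈ K, -x ∈ K)
    (hball : closedBall 0 r ⊆ K) {e f : E} (he : ‖e‖ = 1) (hf : ‖f‖ = 1)
    (hef : inner ℝ e f = 0) (hx : s • e ∈ K) (hr : 0 ≤ r) (hs : 0 < s)
    (hrs : 2 * r ^ 2 < s ^ 2) {a b : ℝ} (ha : 2 * a ^ 2 = s ^ 2)
    (hb : 2 * (s ^ 2 - r ^ 2) * b ^ 2 = r ^ 2 * s ^ 2) (ha₀ : 0 ≤ a) {τ z : ℝ}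
    (hτz : τ ^ 2 + z ^ 2 ≤ 1) : (a * τ) • e + (b * z) • f ∈ K := by
  wlog hτ : 0 ≤ τ generalizing e τ
  · have := this (e := -e) (by rwa [norm_neg]) (by rwa [inner_neg_left, neg_eq_zero])
      (by simpa using hsymm _ hx) (τ := -τ) (by rwa [neg_sq]) (by linarith)
    simpa using this
  rcases sq_add_sq_le_or_cone hs hrs ha hb ha₀ hτ hτz with hin | ⟨hα, hαs, hβ⟩
  · refine hball (mem_closedBall_zero_iff.mpr ?_)
    rwa [← pow_le_pow_iff_left₀ (norm_nonneg _) hr two_ne_zero, norm_smul_add_smul_sq he hf hef]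
  · exact hK.smul_add_smul_mem_of_cone hball he hf hef hx hr hs hα hαs hβ

end Convex

noncomputable def perp (e : ℝ²) : ℝ² := !₂[-e 1, e 0]

lemma inner_perp_right (e : ℝ²) : inner ℝ e (perp e) = 0 := by
  simp [perp, PiLp.inner_apply, Fin.sum_univ_two]; ring

lemma norm_perp (e : ℝ²) : ‖perp e‖ = ‖e‖ := by
  simp [perp, EuclideanSpace.norm_eq, Fin.sum_univ_two, add_comm]

noncomputable def ellipseMap (a b : ℝ) (e : ℝ²) : ℝ² →ₗ[ℝ] ℝ² where
  toFun v := (a * v 0) • e + (b * v 1) • perp e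
  map_add' v w := by simp only [PiLp.add_apply]; module
  map_smul' c v := by simp only [PiLp.smul_apply, smul_eq_mul, RingHom.id_apply]; module

lemma ellipseMap_apply (a b : ℝ) (e v : ℝ²) :
    ellipseMap a b e v = (a * v 0) • e + (b * v 1) • perp e := rfl

lemma det_ellipseMap (a b : ℝ) (e : ℝ²) : LinearMap.det (ellipseMap a b e) = a * b * ‖e‖ ^ 2 := by
  rw [← LinearMap.det_toMatrix (EuclideanSpace.basisFun (Fin 2) ℝ).toBasis, Matrix.det_fin_two,
    EuclideanSpace.real_norm_sq_eq, Fin.sum_univ_two]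
  simp [LinearMap.toMatrix_apply, ellipseMap_apply, perp]
  ring

lemma volume_image_ellipseMap {a b : ℝ} {e : ℝ²} (he : ‖e‖ = 1) :
    volume (ellipseMap a b e '' closedBall 0 1) =
      ENNReal.ofReal |a * b| * ENNReal.ofReal Real.pi := by
  rw [Measure.addHaar_image_linearMap, det_ellipseMap, he]
  simp

lemma sq_add_sq_le_one_of_mem_closedBall {v : ℝ²} (hv : v ∈ closedBall 0 1) :
    v 0 ^ 2 + v 1 ^ 2 ≤ 1 := by
  rw [mem_closedBall_zero_iff] at hv
  have := EuclideanSpace.real_norm_sq_eq v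
  rw [Fin.sum_univ_two] at this
  nlinarith [norm_nonneg v]

theorem Convex.subset_closedBall_sqrt_two_mul {K : Set ℝ²} (hK : Convex ℝ K)
    (hsymm : ∀ x ∈ K, -x ∈ K) {r : ℝ} (hr : 0 < r) (hball : closedBall 0 r ⊆ K)
    (hmax : ∀ S : ℝ² ≃ₗ[ℝ] ℝ², S '' closedBall 0 1 ⊆ K →
      volume (S '' closedBall 0 1) ≤ volume (closedBall (0 : ℝ²) r)) :
    K ⊆ closedBall 0 (√2 * r) := by
  intro x hx
  rw [mem_closedBall_zero_iff]
  by_contra! hlt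
  set s := ‖x‖
  have hs : 0 < s := (by positivity : 0 < √2 * r).trans hlt
  have hrs : 2 * r ^ 2 < s ^ 2 := by
    simpa [mul_pow] using pow_lt_pow_left₀ hlt (by positivity) two_ne_zero
  set e := s⁻¹ • x
  have he : ‖e‖ = 1 := by
    rw [norm_smul, Real.norm_of_nonneg (inv_nonneg.mpr hs.le), inv_mul_cancel₀ hs.ne']
  have hxe : s • e = x := smul_inv_smul₀ hs.ne' x
  have hd : 0 < s ^ 2 - r ^ 2 := by nlinarith
  set a := s / √2
  set b := r * s / √(2 * (s ^ 2 - r ^ 2))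
  have ha : 2 * a ^ 2 = s ^ 2 := by simp [a, div_pow]; field_simp
  have hb : 2 * (s ^ 2 - r ^ 2) * b ^ 2 = r ^ 2 * s ^ 2 := by
    rw [div_pow, Real.sq_sqrt (by positivity)]; field_simp
  have ha₀ : 0 < a := by positivity
  have hb₀ : 0 < b := by positivity
  have hdet : LinearMap.det (ellipseMap a b e) ≠ 0 := by rw [det_ellipseMap, he]; positivity
  have hSK : ellipseMap a b e '' closedBall 0 1 ⊆ K := by
    rintro _ ⟨v, hv, rfl⟩
    exact hK.smul_add_smul_mem_of_ellipse hsymm hball he (by rw [norm_perp, he])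
      (inner_perp_right e) (hxe ▸ hx) hr.le hs hrs ha hb ha₀.le
      (sq_add_sq_le_one_of_mem_closedBall hv)
  have hvol := hmax ((ellipseMap a b e).equivOfDetNeZero hdet) hSK
  change volume (ellipseMap a b e '' closedBall 0 1) ≤ _ at hvol
  rw [volume_image_ellipseMap he,
    EuclideanSpace.volume_closedBall_fin_two, ← ENNReal.ofReal_pow hr.le,
    ENNReal.mul_le_mul_iff_left (by simp [Real.pi_pos]) ENNReal.ofReal_ne_top,
    ENNReal.ofReal_le_ofReal_iff (by positivity), abs_of_pos (by positivity)] at hvol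
  exact hvol.not_gt (sq_lt_mul_of_semiaxes hr hrs ha hb ha₀ hb₀)

lemma pi_mul_sq_le_toReal_volume {C : Set ℝ²} {r : ℝ} (hr : 0 ≤ r) (hC : closedBall 0 r ⊆ C)
    (hfin : volume C ≠ ⊤) : Real.pi * r ^ 2 ≤ (volume C).toReal := by
  have := ENNReal.toReal_mono hfin (measure_mono hC)
  rwa [EuclideanSpace.volume_closedBall_fin_two, ENNReal.toReal_mul, ENNReal.toReal_pow,
    ENNReal.toReal_ofReal hr, ENNReal.toReal_ofReal Real.pi_pos.le, mul_comm] at this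

lemma toReal_volume_le_pi_mul_sq {C : Set ℝ²} {ρ : ℝ} (hρ : 0 ≤ ρ) (hC : C ⊆ closedBall 0 ρ) :
    (volume C).toReal ≤ Real.pi * ρ ^ 2 := by
  have := ENNReal.toReal_mono (measure_closedBall_lt_top (μ := volume)).ne (measure_mono hC)
  rwa [EuclideanSpace.volume_closedBall_fin_two, ENNReal.toReal_mul, ENNReal.toReal_pow,
    ENNReal.toReal_ofReal hρ, ENNReal.toReal_ofReal Real.pi_pos.le, mul_comm] at this

theorem stmt11_general (N : EuclideanSpace ℝ (Fin 2) → ℝ)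
    (hNadd : ∀ x y, N (x + y) ≤ N x + N y)
    (hNsmul : ∀ (c : ℝ) (x), N (c • x) = |c| * N x)
    (C : Set (EuclideanSpace ℝ (Fin 2))) (hC : C = {x | N x ≤ 1})
    (r : ℝ) (hr : 0 < r) (hball : closedBall (0 : EuclideanSpace ℝ (Fin 2)) r ⊆ C)
    (hmax : ∀ S : EuclideanSpace ℝ (Fin 2) ≃ₗ[ℝ] EuclideanSpace ℝ (Fin 2),
      (S '' closedBall 0 1) ⊆ C →
        volume (S '' closedBall 0 1) ≤ volume (closedBall (0 : EuclideanSpace ℝ (Fin 2)) r))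
    (J : ℝ) (hJ : J = Real.pi * 1 ^ 2 / (volume C).toReal) :
    1 / r ^ 2 ≥ J ∧ J ≥ 1 / (2 * r ^ 2) ∧ (1 / r) ^ 2 / J ≤ 2 := by
  let p : Seminorm ℝ ℝ² := Seminorm.of N hNadd hNsmul
  have hCp : C = p.closedBall 0 1 := by
    ext x; rw [hC, Seminorm.mem_closedBall_zero]; rfl
  have hconv : Convex ℝ C := hCp ▸ p.convex_closedBall 0 1
  have hsymm : ∀ x ∈ C, -x ∈ C := by simp [hCp]
  have hsub := hconv.subset_closedBall_sqrt_two_mul hsymm hr hball hmax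
  have hup := toReal_volume_le_pi_mul_sq (by positivity) hsub
  have hlow := pi_mul_sq_le_toReal_volume hr.le hball
    (measure_ne_top_of_subset hsub measure_closedBall_lt_top.ne)
  rw [mul_pow, Real.sq_sqrt zero_le_two] at hup
  have hV : 0 < (volume C).toReal := lt_of_lt_of_le (by positivity) hlow
  rw [one_pow, mul_one] at hJ
  subst hJ
  refine ⟨?_, ?_, ?_⟩
  · rw [ge_iff_le, div_le_div_iff₀ hV (by positivity)]; linarith
  · rw [ge_iff_le, div_le_div_iff₀ (by positivity) hV]; linarith
  · rw [div_pow, one_pow, div_div_eq_mul_div, div_le_iff₀ (by positivity), one_div,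
      inv_mul_le_iff₀ (by positivity)]
    linarith

/-- Let `N` be a norm on `ℝ²` with unit ball `C = {N ≤ 1}` (so `R = 1`), and let
`B(0,r)` be the maximal-area ellipse contained in `C`.  With
`J = ℋ²_N(C)/|C| = π R²/|C|` (Kirchheim's lemma), one has
`R²/r² ≥ J ≥ R²/(2r²)`; in particular `L²/J ≤ 2` for `L = R/r`. -/
theorem stmt11 (N : EuclideanSpace ℝ (Fin 2) → ℝ)
    (hN0 : ∀ x, N x = 0 ↔ x = 0)
    (hNadd : ∀ x y, N (x + y) ≤ N x + N y)
    (hNsmul : ∀ (c : ℝ) (x), N (c • x) = |c| * N x)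
    (C : Set (EuclideanSpace ℝ (Fin 2))) (hC : C = {x | N x ≤ 1})
    (r : ℝ) (hr : 0 < r) (hball : closedBall (0 : EuclideanSpace ℝ (Fin 2)) r ⊆ C)
    (hmax : ∀ S : EuclideanSpace ℝ (Fin 2) ≃ₗ[ℝ] EuclideanSpace ℝ (Fin 2),
      (S '' closedBall 0 1) ⊆ C →
        volume (S '' closedBall 0 1) ≤ volume (closedBall (0 : EuclideanSpace ℝ (Fin 2)) r))
    (J : ℝ) (hJ : J = Real.pi * 1 ^ 2 / (volume C).toReal) :
    1 / r ^ 2 ≥ J ∧ J ≥ 1 / (2 * r ^ 2) ∧ (1 / r) ^ 2 / J ≤ 2 :=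
  stmt11_general N hNadd hNsmul C hC r hr hball hmax J hJ
end
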